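/- arXiv:1603.08576 — 9 statements merged into one kernel-verified Lean document; each statement's English description precedes it below -/
import Mathlib

section
/- Let R be a commutative Noetherian ring and M a finitely generated R-module that is faithful and reflexive. Then the assignment sending an endomorphism g of the trace ideal τ(M) to the unique endomorphism f of M satisfying α(f(m)) = g(α(m)) for all α ∈ Hom_R(M,R) and all m ∈ M is an isomorphism of R-algebras from End_R(τ(M)) onto the center of End_R(M). -/
universe u v

/-- The trace ideal of a module: the ideal generated by all images of maps `M →ₗ[R] R`. -/
def traceIdeal (R : Type u) (M : Type v) [CommRing R] [AddCommGroup M] [Module R M] :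
    Ideal R :=
  ⨆ f : M →ₗ[R] R, LinearMap.range f

theorem apply_mem_traceIdeal {R : Type u} {M : Type v} [CommRing R] [AddCommGroup M]
    [Module R M] (f : M →ₗ[R] R) (m : M) : f m ∈ traceIdeal R M :=
  Submodule.mem_iSup_of_mem f (LinearMap.mem_range_self f m)

/-
For `g ∈ End τ(M)`, the endomorphism `α ↦ g ∘ α` of `M*` transposes, through `M ≃ M**`, to the
unique `f` with `α ∘ f = g ∘ α`; it is central because postcomposing with `g` commutes with
precomposing with any `h`, and `g` is recovered from `f` since `τ(M)` is generated by the `α m`.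
Conversely, comparing a central `f` with the rank-one maps `α(-) n` gives `α m • f = α (f m) • 1`,
so `x • f` is a homothety for every `x ∈ τ(M)`; faithfulness makes the scalar unique, and it is
the value at `x` of the endomorphism of `τ(M)` corresponding to `f`.
-/

section

variable {R : Type u} {M : Type v} [CommRing R] [AddCommGroup M] [Module R M]

theorem Module.End.algebraMap_injective [FaithfulSMul R M] :
    Function.Injective (algebraMap R (Module.End R M)) :=
  fun _ _ h => FaithfulSMul.eq_of_smul_eq_smul fun m => LinearMap.congr_fun h m

theorem Module.End.smul_eq_algebraMap_of_mem_center {f : Module.End R M}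
    (hf : f ∈ Subalgebra.center R (Module.End R M)) (α : M →ₗ[R] R) (m : M) :
    α m • f = algebraMap R (Module.End R M) (α (f m)) := by
  ext n
  simpa using (LinearMap.congr_fun (Subalgebra.mem_center_iff.mp hf (α.smulRight n)) m).symm

theorem Module.ext_of_forall_dual_apply_eq [Module.IsReflexive R M] {x y : M}
    (h : ∀ α : M →ₗ[R] R, α x = α y) : x = y :=
  (Module.bijective_dual_eval R M).injective (LinearMap.ext h)

namespace traceIdeal

theorem end_ext {g g' : Module.End R (traceIdeal R M)}
    (h : ∀ (α : M →ₗ[R] R) (m : M),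
      g ⟨α m, apply_mem_traceIdeal α m⟩ = g' ⟨α m, apply_mem_traceIdeal α m⟩) : g = g' := by
  ext ⟨a, ha⟩
  induction ha using Submodule.iSup_induction' with
  | mem α a ha =>
    obtain ⟨m, rfl⟩ := ha
    exact congrArg Subtype.val (h α m)
  | zero => exact congrArg Subtype.val ((map_zero g).trans (map_zero g').symm)
  | add x y hx hy hgx hgy =>
    change (g (⟨x, hx⟩ + ⟨y, hy⟩) : R) = g' (⟨x, hx⟩ + ⟨y, hy⟩)
    simp only [map_add, Submodule.coe_add, hgx, hgy]

section Center

variable {f : Module.End R M} (hf : f ∈ Subalgebra.center R (Module.End R M))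

include hf in
theorem le_comap_toSpanSingleton_of_mem_center :
    traceIdeal R M ≤ (Submodule.map (Algebra.linearMap R (Module.End R M)) (traceIdeal R M)).comap
      (LinearMap.toSpanSingleton R _ f) :=
  iSup_le fun α => by
    rintro _ ⟨m, rfl⟩
    exact ⟨α (f m), apply_mem_traceIdeal α (f m), by
      simp [Module.End.smul_eq_algebraMap_of_mem_center hf]⟩

/-- For `x ∈ τ(M)`, `x • f` is the homothety by the scalar `endOfMemCenter hf x`, which is
unique because `M` is faithful. -/
noncomputable def endOfMemCenter [FaithfulSMul R M] : Module.End R (traceIdeal R M) :=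
  (Submodule.equivMapOfInjective (Algebra.linearMap R _) Module.End.algebraMap_injective
      _).symm.toLinearMap ∘ₗ
    (LinearMap.toSpanSingleton R _ f).restrict (le_comap_toSpanSingleton_of_mem_center hf)

theorem endOfMemCenter_apply [FaithfulSMul R M] (α : M →ₗ[R] R) (m : M) :
    (endOfMemCenter hf ⟨α m, apply_mem_traceIdeal α m⟩ : R) = α (f m) := by
  apply Module.End.algebraMap_injective (M := M)
  rw [← Module.End.smul_eq_algebraMap_of_mem_center hf]
  exact Submodule.map_equivMapOfInjective_symm_apply (Algebra.linearMap R _)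
    Module.End.algebraMap_injective _ _

end Center

variable [Module.IsReflexive R M]

def endDual (g : Module.End R (traceIdeal R M)) : Module.End R (Module.Dual R M) where
  toFun α := (traceIdeal R M).subtype ∘ₗ g ∘ₗ α.codRestrict _ (apply_mem_traceIdeal α)
  map_add' α β := by
    ext m
    exact congrArg Subtype.val
      (map_add g ⟨α m, apply_mem_traceIdeal α m⟩ ⟨β m, apply_mem_traceIdeal β m⟩)
  map_smul' r α := by
    ext m
    exact congrArg Subtype.val (map_smul g r ⟨α m, apply_mem_traceIdeal α m⟩)

noncomputable def toEnd (g : Module.End R (traceIdeal R M)) : Module.End R M :=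
  (Module.evalEquiv R M).symm.toLinearMap ∘ₗ (endDual g).dualMap ∘ₗ Module.Dual.eval R M

@[simp]
theorem apply_toEnd_apply (g : Module.End R (traceIdeal R M)) (α : M →ₗ[R] R) (m : M) :
    α (toEnd g m) = (g ⟨α m, apply_mem_traceIdeal α m⟩ : R) :=
  Module.apply_evalEquiv_symm_apply ..

theorem toEnd_unique {g : Module.End R (traceIdeal R M)} {f : Module.End R M}
    (hf : ∀ (α : M →ₗ[R] R) (m : M), α (f m) = (g ⟨α m, apply_mem_traceIdeal α m⟩ : R)) :
    toEnd g = f :=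
  LinearMap.ext fun m => Module.ext_of_forall_dual_apply_eq fun α => by rw [hf, apply_toEnd_apply]

noncomputable def toEndAlgHom : Module.End R (traceIdeal R M) →ₐ[R] Module.End R M where
  toFun := toEnd
  map_one' := toEnd_unique fun _ _ => rfl
  map_mul' _ _ := toEnd_unique fun _ _ => by simp
  map_zero' := toEnd_unique fun _ _ => by simp
  map_add' _ _ := toEnd_unique fun _ _ => by simp
  commutes' _ := toEnd_unique fun _ _ => by simp

theorem toEnd_mem_center (g : Module.End R (traceIdeal R M)) :
    toEnd g ∈ Subalgebra.center R (Module.End R M) :=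
  Subalgebra.mem_center_iff.mpr fun h => LinearMap.ext fun m =>
    Module.ext_of_forall_dual_apply_eq fun α =>
      (apply_toEnd_apply g (α ∘ₗ h) m).trans (apply_toEnd_apply g α (h m)).symm

theorem toEnd_injective : Function.Injective (toEnd (R := R) (M := M)) := fun _ _ h =>
  end_ext fun _ _ => Subtype.ext <| by rw [← apply_toEnd_apply, h, apply_toEnd_apply]

theorem toEnd_endOfMemCenter [FaithfulSMul R M] {f : Module.End R M}
    (hf : f ∈ Subalgebra.center R (Module.End R M)) : toEnd (endOfMemCenter hf) = f :=
  toEnd_unique fun α m => (endOfMemCenter_apply hf α m).symm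

end traceIdeal

end

theorem trace_end_iso_center_general (R : Type u) (M : Type v) [CommRing R]
    [AddCommGroup M] [Module R M]
    (hfaithful : Module.annihilator R M = ⊥) [Module.IsReflexive R M] :
    (∀ g : Module.End R (traceIdeal R M), ∃! f : Module.End R M,
      ∀ (α : M →ₗ[R] R) (m : M),
        α (f m) = (g ⟨α m, apply_mem_traceIdeal α m⟩ : R)) ∧
    ∃ e : Module.End R (traceIdeal R M) ≃ₐ[R] Subalgebra.center R (Module.End R M),
      ∀ (g : Module.End R (traceIdeal R M)) (α : M →ₗ[R] R) (m : M),
        α ((e g : Module.End R M) m) = (g ⟨α m, apply_mem_traceIdeal α m⟩ : R) := by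
  have := Module.annihilator_eq_bot.mp hfaithful
  let e := traceIdeal.toEndAlgHom.codRestrict _ (traceIdeal.toEnd_mem_center (R := R) (M := M))
  have he : Function.Bijective e :=
    ⟨fun _ _ h => traceIdeal.toEnd_injective (congrArg Subtype.val h),
      fun ⟨f, hf⟩ => ⟨traceIdeal.endOfMemCenter hf,
        Subtype.ext (traceIdeal.toEnd_endOfMemCenter hf)⟩⟩
  exact ⟨fun g => ⟨traceIdeal.toEnd g, traceIdeal.apply_toEnd_apply g,
      fun _ hf => (traceIdeal.toEnd_unique hf).symm⟩,
    AlgEquiv.ofBijective e he, traceIdeal.apply_toEnd_apply⟩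

/-- Let `R` be a commutative Noetherian ring and `M` a finitely generated `R`-module that is
faithful and reflexive.  Then the assignment sending an endomorphism `g` of the trace ideal
`τ(M)` to the unique endomorphism `f` of `M` satisfying `α (f m) = g (α m)` for all
`α ∈ Hom_R(M,R)` and `m ∈ M` is an isomorphism of `R`-algebras from `End_R(τ(M))` onto the
center of `End_R(M)`. -/
theorem trace_end_iso_center (R : Type u) (M : Type v) [CommRing R] [IsNoetherianRing R]
    [AddCommGroup M] [Module R M] [Module.Finite R M]
    (hfaithful : Module.annihilator R M = ⊥) [Module.IsReflexive R M] :
    (∀ g : Module.End R (traceIdeal R M), ∃! f : Module.End R M,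
      ∀ (α : M →ₗ[R] R) (m : M),
        α (f m) = (g ⟨α m, apply_mem_traceIdeal α m⟩ : R)) ∧
    ∃ e : Module.End R (traceIdeal R M) ≃ₐ[R] Subalgebra.center R (Module.End R M),
      ∀ (g : Module.End R (traceIdeal R M)) (α : M →ₗ[R] R) (m : M),
        α ((e g : Module.End R M) m) = (g ⟨α m, apply_mem_traceIdeal α m⟩ : R) :=
  trace_end_iso_center_general R M hfaithful
end

section
/- Let R be a commutative Noetherian ring and M a finitely generated R-module such that the trace ideal τ(M) contains a nonzerodivisor of R. Then the map ρ : End_R(τ(M)) → End_R(Hom_R(M,R)) which sends g ∈ End_R(τ(M)) to the endomorphism α ↦ g∘α (well defined since every α ∈ Hom_R(M,R) has image contained in τ(M)) is an injective R-algebra homomorphism whose image is exactly the center of End_R(Hom_R(M,R)); in particular End_R(τ(M)) is isomorphic as an R-algebra to the center of End_R(Hom_R(M,R)). -/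
universe u v

/-!
For an endomorphism `g` of an ideal, `g x * y = x * g y`; so once `τ(M)` contains a
nonzerodivisor `r`, `ρ g` is multiplication by the fraction `g r / r` on `M^*`, hence central.
Conversely, a central `φ` commutes with the rank-one maps `δ ↦ δ m • β`, which gives
`γ m * φ β n = φ γ m * β n`. Writing `r = Σ γᵢ mᵢ` and `s = Σ φ γᵢ mᵢ`, multiplication by
`s / r` maps `τ(M)` into itself and is a preimage of `φ`. Injectivity holds because `τ(M)` is
generated by the values `α m`.
-/

open scoped nonZeroDivisors

section General

variable {R : Type*} [CommRing R]

theorem Ideal.end_apply_mul_comm {I : Ideal R} (g : Module.End R I) (x y : I) :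
    (g x : R) * y = x * g y := by
  have hswap : (x : R) • y = (y : R) • x := Subtype.ext (mul_comm _ _)
  have := congrArg (fun z => (g z : R)) hswap
  simp only [map_smul, SetLike.val_smul, smul_eq_mul] at this
  rw [this, mul_comm]

theorem Ideal.exists_end_mul_eq_mul {I : Ideal R} {r s : R} (hr : r ∈ R⁰)
    (h : ∀ x ∈ I, ∃ y ∈ I, y * r = x * s) :
    ∃ g : Module.End R I, ∀ x : I, (g x : R) * r = x * s := by
  choose y hyI hy using fun x : I => h x x.2
  have eq_y {x z : I} (hz : (z : R) * r = x * s) : z = ⟨y x, hyI x⟩ :=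
    Subtype.ext <| (mul_cancel_right_mem_nonZeroDivisors hr).mp (hz.trans (hy x).symm)
  refine ⟨{ toFun x := ⟨y x, hyI x⟩, map_add' x x' := ?_, map_smul' c x := ?_ }, hy⟩
  · exact (eq_y (by simp only [Submodule.coe_add, add_mul, hy])).symm
  · exact (eq_y (by
      simp only [SetLike.val_smul, smul_eq_mul, RingHom.id_apply, mul_assoc, hy])).symm

theorem LinearMap.eq_of_smul_eq_smul_of_mem_nonZeroDivisors {M : Type*} [AddCommGroup M]
    [Module R M] {r : R} (hr : r ∈ R⁰) {f f' : M →ₗ[R] R} (h : r • f = r • f') : f = f' :=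
  ext fun m => (mul_cancel_left_mem_nonZeroDivisors hr).mp congr($h m)

theorem Module.End.smul_eq_smul_of_mem_center {N : Type*} [AddCommGroup N] [Module R N]
    {φ : Module.End R N} (hφ : φ ∈ Subalgebra.center R (Module.End R N))
    (f : Module.Dual R N) (x y : N) : f y • φ x = f (φ y) • x := by
  simpa using (LinearMap.congr_fun ((Subalgebra.mem_center_iff.mp hφ) (f.smulRight x)) y).symm

end General

namespace traceIdeal

variable {R : Type u} {M : Type v} [CommRing R] [AddCommGroup M] [Module R M]

@[elab_as_elim]
theorem induction_on {motive : ∀ x, x ∈ traceIdeal R M → Prop}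
    (apply : ∀ (α : Module.Dual R M) (m : M), motive (α m) (apply_mem_traceIdeal α m))
    (zero : motive 0 (zero_mem _))
    (add : ∀ x y hx hy, motive x hx → motive y hy → motive (x + y) (add_mem hx hy))
    {x : R} (hx : x ∈ traceIdeal R M) : motive x hx :=
  Submodule.iSup_induction' _ (by rintro α _ ⟨m, rfl⟩; exact apply α m) zero add hx

theorem linearMap_ext {N : Type*} [AddCommGroup N] [Module R N]
    {f f' : traceIdeal R M →ₗ[R] N}
    (h : ∀ (α : Module.Dual R M) (m : M),
      f ⟨α m, apply_mem_traceIdeal α m⟩ = f' ⟨α m, apply_mem_traceIdeal α m⟩) :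
    f = f' := by
  ext ⟨x, hx⟩
  induction hx using induction_on with
  | apply α m => exact h α m
  | zero => exact (map_zero f).trans (map_zero f').symm
  | add x y hx hy ihx ihy =>
    exact (f.map_add ⟨x, hx⟩ ⟨y, hy⟩).trans <| (congrArg₂ _ ihx ihy).trans (f'.map_add _ _).symm

def endToDualEnd : Module.End R (traceIdeal R M) →ₐ[R] Module.End R (Module.Dual R M) where
  toFun g :=
    { toFun α := (traceIdeal R M).subtype ∘ₗ g ∘ₗ α.codRestrict _ (apply_mem_traceIdeal α)
      map_add' α β := by
        ext m
        exact congrArg Subtype.val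
          (map_add g ⟨α m, apply_mem_traceIdeal α m⟩ ⟨β m, apply_mem_traceIdeal β m⟩)
      map_smul' c α := by
        ext m
        exact congrArg Subtype.val (map_smul g c ⟨α m, apply_mem_traceIdeal α m⟩) }
  map_one' := rfl
  map_mul' _ _ := rfl
  map_zero' := rfl
  map_add' _ _ := rfl
  commutes' _ := rfl

@[simp]
theorem endToDualEnd_apply_apply (g : Module.End R (traceIdeal R M)) (α : Module.Dual R M)
    (m : M) : endToDualEnd g α m = (g ⟨α m, apply_mem_traceIdeal α m⟩ : R) :=
  rfl

theorem endToDualEnd_injective : Function.Injective (endToDualEnd (R := R) (M := M)) :=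
  fun _ _ h => linearMap_ext fun α m => Subtype.ext congr($h α m)

theorem smul_endToDualEnd_apply (g : Module.End R (traceIdeal R M)) {r : R}
    (hr : r ∈ traceIdeal R M) (α : Module.Dual R M) :
    r • endToDualEnd g α = (g ⟨r, hr⟩ : R) • α := by
  ext m
  simpa [mul_comm] using Ideal.end_apply_mul_comm g ⟨α m, apply_mem_traceIdeal α m⟩ ⟨r, hr⟩

theorem endToDualEnd_mem_center {r : R} (hrτ : r ∈ traceIdeal R M) (hr : r ∈ R⁰)
    (g : Module.End R (traceIdeal R M)) :
    endToDualEnd g ∈ Subalgebra.center R (Module.End R (Module.Dual R M)) := by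
  refine Subalgebra.mem_center_iff.mpr fun h => LinearMap.ext fun α => ?_
  refine LinearMap.eq_of_smul_eq_smul_of_mem_nonZeroDivisors hr ?_
  simp only [Module.End.mul_apply, smul_endToDualEnd_apply g hrτ, ← map_smul]

theorem exists_mul_eq_mul_of_mem_center {φ : Module.End R (Module.Dual R M)}
    (hφ : φ ∈ Subalgebra.center R (Module.End R (Module.Dual R M)))
    {x : R} (hx : x ∈ traceIdeal R M) :
    ∃ s : R, ∀ (γ : Module.Dual R M) (m : M), φ γ m * x = γ m * s := by
  induction hx using induction_on with
  | apply β n =>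
    refine ⟨φ β n, fun γ m => ?_⟩
    have := LinearMap.congr_fun
      (Module.End.smul_eq_smul_of_mem_center hφ (Module.Dual.eval R M m) β γ) n
    simpa using this.symm
  | zero => exact ⟨0, by simp⟩
  | add x y _ _ ihx ihy =>
    obtain ⟨s, hs⟩ := ihx
    obtain ⟨t, ht⟩ := ihy
    exact ⟨s + t, fun γ m => by rw [mul_add, mul_add, hs, ht]⟩

theorem exists_endToDualEnd_eq {r : R} (hrτ : r ∈ traceIdeal R M) (hr : r ∈ R⁰)
    {φ : Module.End R (Module.Dual R M)}
    (hφ : φ ∈ Subalgebra.center R (Module.End R (Module.Dual R M))) :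
    ∃ g, endToDualEnd g = φ := by
  obtain ⟨s, hs⟩ := exists_mul_eq_mul_of_mem_center hφ hrτ
  have hmul : ∀ x ∈ traceIdeal R M, ∃ y ∈ traceIdeal R M, y * r = x * s := by
    intro x hx
    induction hx using induction_on with
    | apply β n => exact ⟨φ β n, apply_mem_traceIdeal _ _, hs β n⟩
    | zero => exact ⟨0, zero_mem _, by simp⟩
    | add x y _ _ ihx ihy =>
      obtain ⟨a, ha, hae⟩ := ihx
      obtain ⟨b, hb, hbe⟩ := ihy
      exact ⟨a + b, add_mem ha hb, by rw [add_mul, add_mul, hae, hbe]⟩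
  obtain ⟨g, hg⟩ := Ideal.exists_end_mul_eq_mul hr hmul
  refine ⟨g, LinearMap.ext fun α => LinearMap.ext fun m => ?_⟩
  exact (mul_cancel_right_mem_nonZeroDivisors hr).mp ((hg _).trans (hs α m).symm)

theorem range_endToDualEnd {r : R} (hrτ : r ∈ traceIdeal R M) (hr : r ∈ R⁰) :
    (endToDualEnd (R := R) (M := M)).range =
      Subalgebra.center R (Module.End R (Module.Dual R M)) := by
  ext φ
  constructor
  · rintro ⟨g, rfl⟩
    exact endToDualEnd_mem_center hrτ hr g
  · exact exists_endToDualEnd_eq hrτ hr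

end traceIdeal

theorem trace_end_iso_center_of_dual_general (R : Type u) (M : Type v) [CommRing R]
    [AddCommGroup M] [Module R M]
    (hreg : ∃ r ∈ traceIdeal R M, r ∈ nonZeroDivisors R) :
    (∃ ρ : Module.End R (traceIdeal R M) →ₐ[R] Module.End R (Module.Dual R M),
      (∀ (g : Module.End R (traceIdeal R M)) (α : Module.Dual R M) (m : M),
        (ρ g α) m = (g ⟨α m, apply_mem_traceIdeal α m⟩ : R)) ∧
      Function.Injective ρ ∧
      ρ.range = Subalgebra.center R (Module.End R (Module.Dual R M))) ∧
    Nonempty (Module.End R (traceIdeal R M) ≃ₐ[R]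
      Subalgebra.center R (Module.End R (Module.Dual R M))) := by
  obtain ⟨r, hrτ, hr⟩ := hreg
  have hinj := traceIdeal.endToDualEnd_injective (R := R) (M := M)
  have hrange := traceIdeal.range_endToDualEnd hrτ hr
  exact ⟨⟨_, traceIdeal.endToDualEnd_apply_apply, hinj, hrange⟩,
    ⟨(AlgEquiv.ofInjective _ hinj).trans (Subalgebra.equivOfEq _ _ hrange)⟩⟩

/-- Let `R` be a commutative Noetherian ring and `M` a finitely generated `R`-module whose
trace ideal `τ(M)` contains a nonzerodivisor.  The map `ρ : End_R(τ(M)) → End_R(M^*)`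
sending `g` to the endomorphism `α ↦ g ∘ α` is an injective `R`-algebra homomorphism whose
image is exactly the center of `End_R(M^*)`; in particular `End_R(τ(M))` is isomorphic as an
`R`-algebra to the center of `End_R(M^*)`. -/
theorem trace_end_iso_center_of_dual (R : Type u) (M : Type v) [CommRing R]
    [IsNoetherianRing R] [AddCommGroup M] [Module R M] [Module.Finite R M]
    (hreg : ∃ r ∈ traceIdeal R M, r ∈ nonZeroDivisors R) :
    (∃ ρ : Module.End R (traceIdeal R M) →ₐ[R] Module.End R (Module.Dual R M),
      (∀ (g : Module.End R (traceIdeal R M)) (α : Module.Dual R M) (m : M),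
        (ρ g α) m = (g ⟨α m, apply_mem_traceIdeal α m⟩ : R)) ∧
      Function.Injective ρ ∧
      ρ.range = Subalgebra.center R (Module.End R (Module.Dual R M))) ∧
    Nonempty (Module.End R (traceIdeal R M) ≃ₐ[R]
      Subalgebra.center R (Module.End R (Module.Dual R M))) :=
  trace_end_iso_center_of_dual_general R M hreg
end

section
/- Let R be a commutative Noetherian ring and M a finitely generated R-module such that the trace ideal τ(M) contains a nonzerodivisor of R. Then End_R(τ(Hom_R(M,R))) ≅ End_R(τ(M)) ≅ Z(End_R(Hom_R(M,R))) as R-algebras, where Z denotes the center. -/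
/-!
For an ideal `I` containing a nonzerodivisor `r`, every `R`-endomorphism `φ` of `I` is
multiplication by the fraction `φ(r) / r`, so `End_R(I)` is the idealizer `(I :_K I)` in the total
ring of fractions `K`. Postcomposition with endomorphisms of `τ(M)` gives central endomorphisms of
`M^*`, and every central `Φ` arises this way: commuting with the rank-one maps `h ↦ h(m) g` forces
`r • Φ = s • id` on `M^*` for some `s ∈ R`, so `Φ` is multiplication by `s / r`. Finally
`τ(M) ⊆ τ(M^*)` have the same idealizer: multiplication by `q ∈ (τ(M) :_K τ(M))` preserves `M^*`,
and every functional on `M^*` commutes with it.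
-/

universe u v

open IsLocalization Module
open scoped nonZeroDivisors

section Idealizer

variable {R : Type*} [CommRing R] (K : Type*) [CommRing K] [Algebra R K]

def Ideal.idealizer (I : Ideal R) : Subalgebra R K :=
  (coeSubmodule K I / coeSubmodule K I).toSubalgebra (Submodule.one_mem_div.mpr le_rfl)
    fun x y hx hy z hz => mul_assoc x y z ▸ hx _ (hy z hz)

variable {K} {I : Ideal R}

theorem Ideal.mem_idealizer_iff_le_comap {q : K} :
    q ∈ I.idealizer K ↔
      I ≤ (coeSubmodule K I).comap (LinearMap.mulLeft R q ∘ₗ Algebra.linearMap R K) := by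
  rw [Submodule.comap_comp, ← Submodule.map_le_iff_le_comap]
  rfl

def Ideal.idealizerToEndCoeSubmodule :
    I.idealizer K →ₐ[R] Module.End R (coeSubmodule K I) where
  toFun q := (LinearMap.mulLeft R (q : K)).restrict fun y hy => q.2 y hy
  map_one' := by ext; simp
  map_mul' _ _ := by ext; exact mul_assoc _ _ _
  map_zero' := by ext; simp
  map_add' _ _ := by ext; exact add_mul _ _ _
  commutes' _ := by ext; simp [Algebra.smul_def]

theorem Ideal.mul_apply_comm (φ : Module.End R I) (x y : I) : (x : R) * φ y = y * φ x := by
  have h : (x : R) • y = (y : R) • x := Subtype.ext (mul_comm _ _)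
  simpa using congr_arg Subtype.val (congr_arg φ h)

variable [IsFractionRing R K]

variable (K) in
noncomputable def Ideal.idealizerToEnd (I : Ideal R) : I.idealizer K →ₐ[R] Module.End R I :=
  ((Submodule.equivMapOfInjective _ (IsFractionRing.injective R K) I).conjAlgEquiv R).symm.toAlgHom
    |>.comp Ideal.idealizerToEndCoeSubmodule

theorem Ideal.algebraMap_idealizerToEnd_apply (q : I.idealizer K) (x : I) :
    algebraMap R K (I.idealizerToEnd K q x) = q * algebraMap R K x :=
  Submodule.map_equivMapOfInjective_symm_apply (Algebra.linearMap R K)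
    (IsFractionRing.injective R K) I _

variable {r : R} (hrI : r ∈ I) (hr : r ∈ R⁰)
include hrI hr

theorem Ideal.idealizerToEnd_injective : Function.Injective (I.idealizerToEnd K) := by
  intro q q' h
  have hq := congr_arg (fun φ : Module.End R I => algebraMap R K (φ ⟨r, hrI⟩)) h
  simp only [Ideal.algebraMap_idealizerToEnd_apply] at hq
  exact Subtype.ext ((map_units K ⟨r, hr⟩).mul_right_cancel hq)

theorem Ideal.idealizerToEnd_surjective : Function.Surjective (I.idealizerToEnd K) := by
  intro φ
  set q : K := mk' K (φ ⟨r, hrI⟩ : R) ⟨r, hr⟩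
  have hq (x : I) : q * algebraMap R K x = algebraMap R K (φ x) := by
    apply (map_units K ⟨r, hr⟩).mul_left_cancel
    rw [← mul_assoc, mul_comm _ q, mk'_spec, ← map_mul, ← map_mul, mul_comm,
      Ideal.mul_apply_comm φ x ⟨r, hrI⟩]
  have hmem : q ∈ I.idealizer K :=
    Ideal.mem_idealizer_iff_le_comap.mpr fun x hx => ⟨_, (φ ⟨x, hx⟩).2, (hq ⟨x, hx⟩).symm⟩
  refine ⟨⟨q, hmem⟩, LinearMap.ext fun x => Subtype.ext (IsFractionRing.injective R K ?_)⟩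
  rw [Ideal.algebraMap_idealizerToEnd_apply, hq]

noncomputable def Ideal.idealizerEquivEnd : I.idealizer K ≃ₐ[R] Module.End R I :=
  AlgEquiv.ofBijective (I.idealizerToEnd K)
    ⟨Ideal.idealizerToEnd_injective hrI hr, Ideal.idealizerToEnd_surjective hrI hr⟩

end Idealizer

section Trace

variable {R : Type*} [CommRing R] {M : Type*} [AddCommGroup M] [Module R M]

theorem apply_mem_traceIdeal_s2 (f : Dual R M) (m : M) : f m ∈ traceIdeal R M :=
  Submodule.mem_iSup_of_mem f ⟨m, rfl⟩

theorem traceIdeal_le_iff {N : Ideal R} : traceIdeal R M ≤ N ↔ ∀ (f : Dual R M) m, f m ∈ N := by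
  simp only [traceIdeal, iSup_le_iff, LinearMap.range_le_iff_comap, Submodule.eq_top_iff',
    Submodule.mem_comap]

theorem traceIdeal_le_traceIdeal_dual : traceIdeal R M ≤ traceIdeal R (Dual R M) :=
  traceIdeal_le_iff.mpr fun f m => apply_mem_traceIdeal_s2 (Dual.eval R M m) f

theorem mem_idealizer_traceIdeal_iff {K : Type*} [CommRing K] [Algebra R K] {q : K} :
    q ∈ (traceIdeal R M).idealizer K ↔
      ∀ (f : Dual R M) m, q * algebraMap R K (f m) ∈ coeSubmodule K (traceIdeal R M) := by
  rw [Ideal.mem_idealizer_iff_le_comap, traceIdeal_le_iff]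
  rfl

variable {I : Ideal R} (hI : traceIdeal R M ≤ I)

def endCompDual : Module.End R I →ₐ[R] Module.End R (Dual R M) where
  toFun φ :=
    { toFun f := I.subtype ∘ₗ φ ∘ₗ f.codRestrict I fun m => hI (apply_mem_traceIdeal_s2 f m)
      map_add' f g := by
        ext m
        exact congr_arg Subtype.val <| map_add φ ⟨f m, hI (apply_mem_traceIdeal_s2 f m)⟩
          ⟨g m, hI (apply_mem_traceIdeal_s2 g m)⟩
      map_smul' c f := by
        ext m
        exact congr_arg Subtype.val (map_smul φ c ⟨f m, hI (apply_mem_traceIdeal_s2 f m)⟩) }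
  map_one' := by ext; simp
  map_mul' _ _ := by ext; rfl
  map_zero' := by ext; simp
  map_add' _ _ := by ext; simp
  commutes' _ := by ext; simp

@[simp]
theorem endCompDual_apply_apply (φ : Module.End R I) (f : Dual R M) (m : M) :
    endCompDual hI φ f m = φ ⟨f m, hI (apply_mem_traceIdeal_s2 f m)⟩ :=
  rfl

theorem smul_endCompDual (φ : Module.End R I) (x : I) (f : Dual R M) :
    (x : R) • endCompDual hI φ f = (φ x : R) • f := by
  ext m
  simp [Ideal.mul_apply_comm φ x, mul_comm]

theorem endCompDual_mem_center {r : R} (hrI : r ∈ I) (hr : r ∈ R⁰) (φ : Module.End R I) :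
    endCompDual hI φ ∈ Subalgebra.center R (Module.End R (Dual R M)) := by
  refine Subalgebra.mem_center_iff.mpr fun Ψ => LinearMap.ext fun f => ?_
  apply (isRegular_iff_mem_nonZeroDivisors.mpr hr).isSMulRegular
  calc r • Ψ (endCompDual hI φ f)
      = Ψ ((φ ⟨r, hrI⟩ : R) • f) := by rw [← map_smul, ← smul_endCompDual hI φ ⟨r, hrI⟩]
    _ = r • endCompDual hI φ (Ψ f) := by rw [map_smul, smul_endCompDual hI φ ⟨r, hrI⟩]

theorem endCompDual_injective : Function.Injective (endCompDual (le_refl (traceIdeal R M))) := by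
  intro φ ψ h
  have hgen : traceIdeal R M ≤ (LinearMap.eqLocus φ ψ).map (traceIdeal R M).subtype :=
    traceIdeal_le_iff.mpr fun f m => ⟨_, Subtype.ext congr($h f m), rfl⟩
  refine LinearMap.ext fun x => ?_
  obtain ⟨y, hy, hyx⟩ := hgen x.2
  rwa [Subtype.ext hyx] at hy

end Trace

section Center

variable {R : Type*} [CommRing R] {M : Type*} [AddCommGroup M] [Module R M]
  {Φ : Module.End R (Dual R M)} (hΦ : Φ ∈ Subalgebra.center R (Module.End R (Dual R M)))
include hΦ

theorem apply_smul_eq_smul_apply_of_mem_center (f g : Dual R M) (m : M) :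
    Φ f m • g = f m • Φ g := by
  -- `Φ` commutes with the rank-one operator `h ↦ h m • g`
  simpa using congr($(Subalgebra.mem_center_iff.mp hΦ ((Dual.eval R M m).smulRight g)) f)

theorem exists_smul_eq_smul_of_mem_center {x : R} (hx : x ∈ traceIdeal R M) :
    ∃ s : R, ∀ g, x • Φ g = s • g := by
  refine Submodule.iSup_induction _ (motive := fun x => ∃ s : R, ∀ g, x • Φ g = s • g) hx ?_
    ⟨0, fun g => by simp⟩ ?_
  · rintro f _ ⟨m, rfl⟩
    exact ⟨Φ f m, fun g => (apply_smul_eq_smul_apply_of_mem_center hΦ f g m).symm⟩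
  · rintro x y ⟨s, hs⟩ ⟨t, ht⟩
    exact ⟨s + t, fun g => by rw [add_smul, add_smul, hs, ht]⟩

theorem mem_range_endCompDual_of_mem_center {r : R} (hrI : r ∈ traceIdeal R M) (hr : r ∈ R⁰) :
    Φ ∈ (endCompDual (le_refl (traceIdeal R M))).range := by
  obtain ⟨s, hs⟩ := exists_smul_eq_smul_of_mem_center hΦ hrI
  set K := FractionRing R
  set q : K := mk' K s ⟨r, hr⟩
  have hq (g : Dual R M) (n : M) : q * algebraMap R K (g n) = algebraMap R K (Φ g n) := by
    apply (map_units K ⟨r, hr⟩).mul_left_cancel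
    rw [← mul_assoc, mul_comm _ q, mk'_spec, ← map_mul, ← map_mul]
    simpa using congr(algebraMap R K ($(hs g) n)).symm
  have hmem : q ∈ (traceIdeal R M).idealizer K :=
    mem_idealizer_traceIdeal_iff.mpr fun g n =>
      ⟨Φ g n, apply_mem_traceIdeal_s2 (Φ g) n, (hq g n).symm⟩
  refine (endCompDual le_rfl).mem_range.mpr ⟨(traceIdeal R M).idealizerToEnd K ⟨q, hmem⟩, ?_⟩
  ext g n
  apply IsFractionRing.injective R K
  rw [endCompDual_apply_apply, Ideal.algebraMap_idealizerToEnd_apply, hq]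

end Center

section Main

variable {R : Type*} [CommRing R] {M : Type*} [AddCommGroup M] [Module R M]
  (K : Type*) [CommRing K] [Algebra R K] [IsFractionRing R K]

theorem idealizer_traceIdeal_dual_le :
    (traceIdeal R (Dual R M)).idealizer K ≤ (traceIdeal R M).idealizer K := by
  intro q hq
  refine mem_idealizer_traceIdeal_iff.mpr fun f m => ?_
  set g := endCompDual traceIdeal_le_traceIdeal_dual
    ((traceIdeal R (Dual R M)).idealizerToEnd K ⟨q, hq⟩) f
  exact ⟨g m, apply_mem_traceIdeal_s2 g m, Ideal.algebraMap_idealizerToEnd_apply _ _⟩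

variable {r : R} (hrI : r ∈ traceIdeal R M) (hr : r ∈ R⁰)
include hrI hr

theorem idealizer_traceIdeal_le_dual :
    (traceIdeal R M).idealizer K ≤ (traceIdeal R (Dual R M)).idealizer K := by
  intro q hq
  refine mem_idealizer_traceIdeal_iff.mpr fun α f => ?_
  set φ := (traceIdeal R M).idealizerToEnd K ⟨q, hq⟩
  refine ⟨α (endCompDual le_rfl φ f), apply_mem_traceIdeal_s2 α _, ?_⟩
  apply (map_units K ⟨r, hr⟩).mul_left_cancel
  have h := congr(algebraMap R K (α $(smul_endCompDual le_rfl φ ⟨r, hrI⟩ f)))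
  have hφ : algebraMap R K (φ ⟨r, hrI⟩) = q * algebraMap R K r :=
    Ideal.algebraMap_idealizerToEnd_apply _ _
  simp only [map_smul, smul_eq_mul, map_mul, hφ] at h
  rw [Algebra.linearMap_apply, h]
  ring

theorem idealizer_traceIdeal_dual :
    (traceIdeal R (Dual R M)).idealizer K = (traceIdeal R M).idealizer K :=
  le_antisymm (idealizer_traceIdeal_dual_le K) (idealizer_traceIdeal_le_dual K hrI hr)

theorem range_endCompDual :
    (endCompDual (le_refl (traceIdeal R M))).range =
      Subalgebra.center R (Module.End R (Dual R M)) :=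
  le_antisymm (by rintro _ ⟨φ, rfl⟩; exact endCompDual_mem_center le_rfl hrI hr φ)
    fun _ hΦ => mem_range_endCompDual_of_mem_center hΦ hrI hr

end Main

theorem trace_end_isos_general (R : Type u) (M : Type v) [CommRing R]
    [AddCommGroup M] [Module R M]
    (hreg : ∃ r ∈ traceIdeal R M, r ∈ nonZeroDivisors R) :
    Nonempty (Module.End R (traceIdeal R (Module.Dual R M)) ≃ₐ[R]
      Module.End R (traceIdeal R M)) ∧
    Nonempty (Module.End R (traceIdeal R M) ≃ₐ[R]
      Subalgebra.center R (Module.End R (Module.Dual R M))) := by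
  obtain ⟨r, hrI, hr⟩ := hreg
  set K := FractionRing R
  have hrJ : r ∈ traceIdeal R (Dual R M) := traceIdeal_le_traceIdeal_dual hrI
  refine ⟨⟨?_⟩, ⟨?_⟩⟩
  · exact (Ideal.idealizerEquivEnd (K := K) hrJ hr).symm.trans <|
      (Subalgebra.equivOfEq _ _ (idealizer_traceIdeal_dual K hrI hr)).trans <|
        Ideal.idealizerEquivEnd hrI hr
  · exact (AlgEquiv.ofInjective _ endCompDual_injective).trans <|
      Subalgebra.equivOfEq _ _ (range_endCompDual hrI hr)

/-- Let `R` be a commutative Noetherian ring and `M` a finitely generated `R`-module whose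
trace ideal `τ(M)` contains a nonzerodivisor.  Then
`End_R(τ(M^*)) ≅ End_R(τ(M)) ≅ Z(End_R(M^*))` as `R`-algebras. -/
theorem trace_end_isos (R : Type u) (M : Type v) [CommRing R] [IsNoetherianRing R]
    [AddCommGroup M] [Module R M] [Module.Finite R M]
    (hreg : ∃ r ∈ traceIdeal R M, r ∈ nonZeroDivisors R) :
    Nonempty (Module.End R (traceIdeal R (Module.Dual R M)) ≃ₐ[R]
      Module.End R (traceIdeal R M)) ∧
    Nonempty (Module.End R (traceIdeal R M) ≃ₐ[R]
      Subalgebra.center R (Module.End R (Module.Dual R M))) :=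
  trace_end_isos_general R M hreg
end

section
/- Let (R,m,k) be a commutative Noetherian local ring of depth at most 1 and M a finitely generated reflexive R-module. If End_R(M) has a nonzero free R-module direct summand, then M has a nonzero free R-module direct summand. Consequently, if End_R(M) is a free R-module then M is a free R-module. -/
open CategoryTheory

universe u v

/-- Depth at most one: `Hom_R(k,R) ≠ 0` or `Ext¹_R(k,R) ≠ 0`, where `k` is the residue
field of the local ring `R`. -/
def DepthLEOne (R : Type u) [CommRing R] [IsLocalRing R] : Prop :=
  Nontrivial (IsLocalRing.ResidueField R →ₗ[R] R) ∨
  Nontrivial (((Ext R (ModuleCat.{u} R) 1).obj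
    (Opposite.op (ModuleCat.of R (IsLocalRing.ResidueField R)))).obj (ModuleCat.of R R))

/-!
Suppose no functional `M → R` is onto, so that `f m ∈ 𝔪` for all `f : M^*` and `m : M`, and let
`π : End M → R` be onto, say `π g = 1`. If `𝔪 x = 0`, then every functional kills `x g`, so
`x g = 0` by reflexivity and `x = π (x g) = 0`: hence `Hom(k, R) = 0`. Given `ψ : 𝔪 → R`,
reflexivity yields an endomorphism `g_ψ` with `f (g_ψ m) = ψ (f (g m))`; then `a g_ψ = ψ(a) g`
for `a ∈ 𝔪`, so `ψ` is multiplication by `π g_ψ`. Every map `𝔪 → R` thus extends to `R`, which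
gives `Ext¹(k, R) = 0`. Both contradict depth at most one, so some `f m = 1` and `R` splits off `M`.

If `End M` is free, splitting `M ≅ K ⊕ R` makes `End K` a direct summand of `End M`, hence free,
while `dim_k (k ⊗ K) < dim_k (k ⊗ M)`; induction then shows that `M` is free.
-/

open IsLocalRing TensorProduct

section Reflexive

variable {R M : Type*} [CommRing R] [AddCommGroup M] [Module R M] [Module.IsReflexive R M]

theorem Module.End.ext_of_forall_dual_apply_eq {u v : Module.End R M}
    (h : ∀ (f : Module.Dual R M) (m : M), f (u m) = f (v m)) : u = v :=
  LinearMap.ext fun m => (Module.bijective_dual_eval R M).injective (LinearMap.ext (h · m))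

variable {I : Ideal R}

theorem eq_zero_of_forall_mem_ideal_mul_eq_zero (hI : ∀ (f : Module.Dual R M) (m : M), f m ∈ I)
    {π : Module.Dual R (Module.End R M)} {g : Module.End R M} (hπ : π g = 1)
    {x : R} (hx : ∀ a ∈ I, a * x = 0) : x = 0 := by
  have hxg : x • g = 0 := Module.End.ext_of_forall_dual_apply_eq fun f m => by
    rw [LinearMap.smul_apply, map_smul, smul_eq_mul, mul_comm, hx _ (hI f (g m)),
      LinearMap.zero_apply, map_zero]
  simpa [hπ] using congrArg π hxg

theorem exists_eq_mul_of_linearMap_ideal (hI : ∀ (f : Module.Dual R M) (m : M), f m ∈ I)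
    {π : Module.Dual R (Module.End R M)} {g : Module.End R M} (hπ : π g = 1)
    (ψ : I →ₗ[R] R) : ∃ c : R, ∀ a, ψ a = c * a := by
  let B : M →ₗ[R] Module.Dual R M →ₗ[R] I :=
    LinearMap.codRestrict₂ (Module.Dual.eval R M ∘ₗ g) I.subtype Subtype.val_injective
      (fun m f => by simpa using hI f (g m))
  have hB : ∀ m f, (B m f : R) = f (g m) := fun m f =>
    LinearMap.codRestrict₂_apply (Module.Dual.eval R M ∘ₗ g) I.subtype _ _ m f
  let gψ : Module.End R M := (Module.evalEquiv R M).symm.toLinearMap ∘ₗ B.compr₂ ψ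
  have hgψ : ∀ a : I, (a : R) • gψ = ψ a • g := fun a =>
    Module.End.ext_of_forall_dual_apply_eq fun f m => by
      have hf : f (gψ m) = ψ (B m f) := Module.apply_evalEquiv_symm_apply R M f _
      have hBa : (a : R) • B m f = f (g m) • a := Subtype.ext (by simp [hB, mul_comm])
      rw [LinearMap.smul_apply, LinearMap.smul_apply, map_smul, map_smul, hf, ← map_smul, hBa,
        map_smul, smul_eq_mul, smul_eq_mul, mul_comm]
  refine ⟨π gψ, fun a => ?_⟩
  simpa [hπ, mul_comm] using (congrArg π (hgψ a)).symm

end Reflexive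

section Splitting

variable {R M : Type*} [CommRing R] [AddCommGroup M] [Module R M]

theorem Module.Free.exists_dual_apply_eq_one [Nontrivial M] [Module.Free R M] :
    ∃ f : Module.Dual R M, ∃ m, f m = 1 := by
  let b := Module.Free.chooseBasis R M
  obtain ⟨i⟩ := b.index_nonempty
  exact ⟨b.coord i, b i, by simp⟩

theorem nonempty_linearEquiv_prod_of_dual_apply_eq_one {f : Module.Dual R M} {m : M}
    (h : f m = 1) : Nonempty (M ≃ₗ[R] LinearMap.ker f × R) :=
  ⟨((LinearMap.exact_subtype_ker_map f).splitSurjectiveEquiv (Submodule.injective_subtype _)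
    ⟨LinearMap.toSpanSingleton R M m, by ext; simp [h]⟩).1⟩

theorem Module.Projective.end_of_comp_eq_id {K : Type*} [AddCommGroup K] [Module R K]
    [Module.Projective R (Module.End R M)] (i : K →ₗ[R] M) (p : M →ₗ[R] K)
    (h : p ∘ₗ i = LinearMap.id) : Module.Projective R (Module.End R K) :=
  .of_split (LinearMap.compRight R i ∘ₗ LinearMap.lcomp R K p)
    (LinearMap.compRight R p ∘ₗ LinearMap.lcomp R M i) <| by
    have hpi : ∀ x, p (i x) = x := LinearMap.congr_fun h
    ext u x
    simp [hpi]

end Splitting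

theorem LinearMap.exists_comp_rangeRestrict_eq {R Q P N : Type*} [Ring R] [AddCommGroup Q]
    [AddCommGroup P] [AddCommGroup N] [Module R Q] [Module R P] [Module R N]
    {d : Q →ₗ[R] P} {φ : Q →ₗ[R] N} (h : LinearMap.ker d ≤ LinearMap.ker φ) :
    ∃ φ' : LinearMap.range d →ₗ[R] N, φ' ∘ₗ d.rangeRestrict = φ :=
  ⟨(LinearMap.ker d).liftQ φ h ∘ₗ d.quotKerEquivRange.symm.toLinearMap, by
    ext y
    exact congrArg ((LinearMap.ker d).liftQ φ h)
      (d.quotKerEquivRange_symm_apply_image y (LinearMap.mem_range_self d y))⟩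

section LocalRing

variable {R : Type u} [CommRing R] [IsLocalRing R]

theorem smul_one_eq_residue (a : R) : a • (1 : ResidueField R) = residue R a := by
  rw [Algebra.smul_def, mul_one, ResidueField.algebraMap_eq]

theorem exists_extension_of_ker_residue
    (hm : ∀ ψ : maximalIdeal R →ₗ[R] R, ∃ c : R, ∀ a, ψ a = c * a)
    {P : Type*} [AddCommGroup P] [Module R P] [Module.Projective R P]
    (ε : P →ₗ[R] ResidueField R) (hε : Function.Surjective ε) (φ : LinearMap.ker ε →ₗ[R] R) :
    ∃ ψ : P →ₗ[R] R, ψ ∘ₗ (LinearMap.ker ε).subtype = φ := by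
  obtain ⟨α, hα⟩ := Module.projective_lifting_property (Algebra.linearMap R (ResidueField R)) ε
    residue_surjective
  have hα' : ∀ x, residue R (α x) = ε x := fun x => by
    simpa [ResidueField.algebraMap_eq] using LinearMap.congr_fun hα x
  obtain ⟨p, hp⟩ := hε 1
  have smul_mem : ∀ a ∈ maximalIdeal R, a • p ∈ LinearMap.ker ε := fun a ha => by
    rw [LinearMap.mem_ker, map_smul, hp, smul_one_eq_residue, residue_eq_zero_iff]
    exact ha
  have sub_mem : ∀ x, x - α x • p ∈ LinearMap.ker ε := fun x => by
    rw [LinearMap.mem_ker, map_sub, map_smul, hp, smul_one_eq_residue, hα', sub_self]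
  obtain ⟨c, hc⟩ := hm (φ ∘ₗ (LinearMap.toSpanSingleton R P p).restrict smul_mem)
  -- `ψ x = φ (x - α x • p) + c * α x`; on `ker ε` we have `α x ∈ 𝔪`, so the two `c * α x` cancel
  refine ⟨φ ∘ₗ (LinearMap.id - LinearMap.toSpanSingleton R P p ∘ₗ α).codRestrict _ sub_mem
    + c • α, LinearMap.ext fun ⟨x, hx⟩ => ?_⟩
  have hαx : α x ∈ maximalIdeal R := by
    rw [← residue_eq_zero_iff, hα']
    exact hx
  have hsplit : (⟨x - α x • p, sub_mem x⟩ : LinearMap.ker ε) =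
      ⟨x, hx⟩ - ⟨α x • p, smul_mem _ hαx⟩ := rfl
  have hcx : φ ⟨α x • p, smul_mem _ hαx⟩ = c * α x := hc ⟨α x, hαx⟩
  change φ ⟨x - α x • p, sub_mem x⟩ + c * α x = φ ⟨x, hx⟩
  rw [hsplit, map_sub, hcx, sub_add_cancel]

theorem subsingleton_residueField_linearMap
    (hsoc : ∀ x : R, (∀ a ∈ maximalIdeal R, a * x = 0) → x = 0) :
    Subsingleton (ResidueField R →ₗ[R] R) := by
  refine subsingleton_of_forall_eq 0 fun φ => LinearMap.ext fun z => ?_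
  have hφ1 : φ 1 = 0 := hsoc _ fun a ha => by
    rw [← smul_eq_mul, ← map_smul, smul_one_eq_residue, (residue_eq_zero_iff a).2 ha, map_zero]
  obtain ⟨r, rfl⟩ := residue_surjective z
  rw [← smul_one_eq_residue, map_smul, hφ1, smul_zero, LinearMap.zero_apply]

theorem subsingleton_ext_one_residueField
    (hm : ∀ ψ : maximalIdeal R →ₗ[R] R, ∃ c : R, ∀ a, ψ a = c * a) :
    Subsingleton (((Ext R (ModuleCat.{u} R) 1).obj
      (Opposite.op (ModuleCat.of R (ResidueField R)))).obj (ModuleCat.of R R)) := by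
  let P := ProjectiveResolution.of (ModuleCat.of R (ResidueField R))
  suffices h : Limits.IsZero ((P.complex.linearYonedaObj R (ModuleCat.of R R)).homology 1) from
    ModuleCat.subsingleton_of_isZero (h.of_iso (P.isoExt 1 _))
  rw [← HomologicalComplex.exactAt_iff_isZero_homology,
    HomologicalComplex.exactAt_iff' _ 0 1 2 (by simp) (by simp),
    ShortComplex.moduleCat_exact_iff]
  intro φ hφ
  change P.complex.X 1 ⟶ ModuleCat.of R R at φ
  have hφ' : P.complex.d 2 1 ≫ φ = 0 := hφ
  have h1 := (P.exact_succ 0).moduleCat_range_eq_ker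
  have h0 := P.exact₀.moduleCat_range_eq_ker
  have hε : Function.Surjective (P.π.f 0).hom := (ModuleCat.epi_iff_surjective _).1 inferInstance
  have hker : LinearMap.ker (P.complex.d 1 0).hom ≤ LinearMap.ker φ.hom := by
    intro x hx
    rw [← h1] at hx
    obtain ⟨y, rfl⟩ := hx
    exact congrArg (fun f => f.hom y) hφ'
  obtain ⟨φ', hφ'⟩ := LinearMap.exists_comp_rangeRestrict_eq hker
  obtain ⟨ψ, hψ⟩ := exists_extension_of_ker_residue hm _ hε
    (φ' ∘ₗ (LinearEquiv.ofEq _ _ h0.symm).toLinearMap)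
  replace hψ : ψ ∘ₗ (P.complex.d 1 0).hom = φ.hom := by
    rw [← hφ']
    ext y
    exact LinearMap.congr_fun hψ ⟨_, h0 ▸ LinearMap.mem_range_self _ y⟩
  refine ⟨ModuleCat.ofHom ψ, ?_⟩
  change P.complex.d 1 0 ≫ ModuleCat.ofHom ψ = φ
  exact ModuleCat.hom_ext hψ

theorem not_depthLEOne (hsoc : ∀ x : R, (∀ a ∈ maximalIdeal R, a * x = 0) → x = 0)
    (hm : ∀ ψ : maximalIdeal R →ₗ[R] R, ∃ c : R, ∀ a, ψ a = c * a) : ¬ DepthLEOne R := by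
  rintro (h | h)
  · exact not_subsingleton _ (subsingleton_residueField_linearMap hsoc)
  · exact not_subsingleton _ (subsingleton_ext_one_residueField hm)

theorem exists_dual_apply_eq_one_of_end (hdepth : DepthLEOne R) {M : Type*} [AddCommGroup M]
    [Module R M] [Module.IsReflexive R M] {π : Module.Dual R (Module.End R M)}
    {g : Module.End R M} (hπ : π g = 1) : ∃ f : Module.Dual R M, ∃ m, f m = 1 := by
  by_contra! h
  have hI : ∀ (f : Module.Dual R M) m, f m ∈ maximalIdeal R := fun f m => by
    by_contra hfm
    have hu : IsUnit (f m) := notMem_maximalIdeal.1 hfm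
    exact h (hu.unit⁻¹ • f) m (by simp [Units.smul_def])
  exact not_depthLEOne (fun _ => eq_zero_of_forall_mem_ideal_mul_eq_zero hI hπ)
    (exists_eq_mul_of_linearMap_ideal hI hπ) hdepth

theorem finrank_residueField_tensor_of_equiv_prod {M K : Type*} [AddCommGroup M] [Module R M]
    [AddCommGroup K] [Module R K] [Module.Finite R K] (e : M ≃ₗ[R] K × R) :
    Module.finrank (ResidueField R) (ResidueField R ⊗[R] M) =
      Module.finrank (ResidueField R) (ResidueField R ⊗[R] K) + 1 := by
  rw [((e.baseChange R (ResidueField R) M _).trans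
    (TensorProduct.prodRight R _ _ K R)).finrank_eq, Module.finrank_prod,
    Module.finrank_baseChange (M' := R), Module.finrank_self]

theorem Module.free_of_free_end [IsNoetherianRing R] (hdepth : DepthLEOne R) (M : Type*)
    [AddCommGroup M] [Module R M] [Module.Finite R M] [Module.IsReflexive R M]
    [Module.Free R (Module.End R M)] : Module.Free R M := by
  induction h : Module.finrank (ResidueField R) (ResidueField R ⊗[R] M) generalizing M with
  | zero =>
    have : Subsingleton (ResidueField R ⊗[R] M) := Module.finrank_zero_iff.mp h
    have : Subsingleton M := subsingleton_tensorProduct.mp this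
    exact .of_subsingleton R M
  | succ n ih =>
    rcases subsingleton_or_nontrivial M with hM | hM
    · exact .of_subsingleton R M
    obtain ⟨π, g, hπ⟩ := Module.Free.exists_dual_apply_eq_one (R := R) (M := Module.End R M)
    obtain ⟨f, m, hfm⟩ := exists_dual_apply_eq_one_of_end hdepth hπ
    obtain ⟨e⟩ := nonempty_linearEquiv_prod_of_dual_apply_eq_one hfm
    let i := e.symm.toLinearMap ∘ₗ LinearMap.inl R (LinearMap.ker f) R
    let p := LinearMap.fst R (LinearMap.ker f) R ∘ₗ e.toLinearMap
    have hpi : p ∘ₗ i = LinearMap.id := by ext; simp [i, p]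
    have : Module.Finite R (LinearMap.ker f) :=
      .of_surjective p (Function.LeftInverse.surjective (LinearMap.congr_fun hpi))
    have : Module.IsReflexive R (LinearMap.ker f) := .of_split i p hpi
    have : Module.Projective R (Module.End R (LinearMap.ker f)) := .end_of_comp_eq_id i p hpi
    have : Module.Free R (Module.End R (LinearMap.ker f)) := Module.free_of_flat_of_isLocalRing
    have := ih (LinearMap.ker f) (by have := finrank_residueField_tensor_of_equiv_prod e; omega)
    exact .of_equiv e.symm

end LocalRing

/-- Let `(R,m,k)` be a commutative Noetherian local ring of depth at most 1 and `M` a finitely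
generated reflexive `R`-module.  If `End_R(M)` has a nonzero free direct summand then so does
`M`; consequently, if `End_R(M)` is a free `R`-module then `M` is a free `R`-module. -/
theorem free_summand_of_end_free_summand (R : Type u) (M : Type v) [CommRing R]
    [IsNoetherianRing R] [IsLocalRing R] (hdepth : DepthLEOne R)
    [AddCommGroup M] [Module R M] [Module.Finite R M] [Module.IsReflexive R M] :
    ((∃ (N : Type (max u v)) (_ : AddCommGroup N) (_ : Module R N),
        Nonempty (Module.End R M ≃ₗ[R] N × R)) →
      ∃ (N' : Type v) (_ : AddCommGroup N') (_ : Module R N'),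
        Nonempty (M ≃ₗ[R] N' × R)) ∧
    (Module.Free R (Module.End R M) → Module.Free R M) := by
  refine ⟨fun ⟨N, _, _, ⟨e⟩⟩ => ?_, fun _ => Module.free_of_free_end hdepth M⟩
  obtain ⟨f, m, hfm⟩ := exists_dual_apply_eq_one_of_end hdepth
    (π := LinearMap.snd R N R ∘ₗ e.toLinearMap) (g := e.symm (0, 1)) (by simp)
  exact ⟨_, _, _, nonempty_linearEquiv_prod_of_dual_apply_eq_one hfm⟩
end

section
/- Let R be a commutative ring and M a reflexive R-module. Then for every endomorphism g of the trace ideal τ(M) there exists a unique endomorphism f of M such that α(f(m)) = g(α(m)) for all α ∈ Hom_R(M,R) and all m ∈ M, and the assignment σ : g ↦ f is an injective R-algebra homomorphism from End_R(τ(M)) into End_R(M) whose image is contained in the center Z(End_R(M)) of End_R(M). -/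
universe u v

section Aux

variable {R : Type u} {M : Type v} [CommRing R] [AddCommGroup M] [Module R M]

theorem gcongr_trace (g : Module.End R (traceIdeal R M)) {x y : R}
    (hx : x ∈ traceIdeal R M) (hy : y ∈ traceIdeal R M) (h : x = y) :
    (g ⟨x, hx⟩ : R) = g ⟨y, hy⟩ := by subst h; rfl

/-- The double-dual element `α ↦ g ⟨α m⟩`. -/
def traceDual (g : Module.End R (traceIdeal R M)) (m : M) :
    Module.Dual R (Module.Dual R M) where
  toFun α := (g ⟨α m, apply_mem_traceIdeal α m⟩ : R)
  map_add' α β := by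
    show (g ⟨(α + β) m, apply_mem_traceIdeal (α + β) m⟩ : R)
        = (g ⟨α m, apply_mem_traceIdeal α m⟩ : R) + (g ⟨β m, apply_mem_traceIdeal β m⟩ : R)
    rw [gcongr_trace g _ (add_mem (apply_mem_traceIdeal α m) (apply_mem_traceIdeal β m))
      (by simp)]
    rw [show (⟨α m + β m, _⟩ : traceIdeal R M)
        = ⟨α m, apply_mem_traceIdeal α m⟩ + ⟨β m, apply_mem_traceIdeal β m⟩ from rfl,
      map_add, Submodule.coe_add]
  map_smul' r α := by
    show (g ⟨(r • α) m, apply_mem_traceIdeal (r • α) m⟩ : R)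
        = r • (g ⟨α m, apply_mem_traceIdeal α m⟩ : R)
    rw [gcongr_trace g _ (Submodule.smul_mem _ r (apply_mem_traceIdeal α m)) (by simp)]
    rw [show (⟨r • α m, _⟩ : traceIdeal R M)
        = r • ⟨α m, apply_mem_traceIdeal α m⟩ from rfl, map_smul]
    rfl

@[simp] theorem traceDual_apply (g : Module.End R (traceIdeal R M)) (m : M)
    (α : Module.Dual R M) :
    traceDual g m α = (g ⟨α m, apply_mem_traceIdeal α m⟩ : R) := rfl

/-- `traceDual` as a linear map in `m`. -/
def traceDualLM (g : Module.End R (traceIdeal R M)) :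
    M →ₗ[R] Module.Dual R (Module.Dual R M) where
  toFun := traceDual g
  map_add' m n := by
    ext α
    show (g ⟨α (m + n), apply_mem_traceIdeal α (m + n)⟩ : R)
        = (g ⟨α m, apply_mem_traceIdeal α m⟩ : R) + (g ⟨α n, apply_mem_traceIdeal α n⟩ : R)
    rw [gcongr_trace g _ (add_mem (apply_mem_traceIdeal α m) (apply_mem_traceIdeal α n))
      (by simp)]
    rw [show (⟨α m + α n, _⟩ : traceIdeal R M)
        = ⟨α m, apply_mem_traceIdeal α m⟩ + ⟨α n, apply_mem_traceIdeal α n⟩ from rfl,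
      map_add, Submodule.coe_add]
  map_smul' r m := by
    ext α
    show (g ⟨α (r • m), apply_mem_traceIdeal α (r • m)⟩ : R)
        = r • (g ⟨α m, apply_mem_traceIdeal α m⟩ : R)
    rw [gcongr_trace g _ (Submodule.smul_mem _ r (apply_mem_traceIdeal α m)) (by simp)]
    rw [show (⟨r • α m, _⟩ : traceIdeal R M)
        = r • ⟨α m, apply_mem_traceIdeal α m⟩ from rfl, map_smul]
    rfl

variable [Module.IsReflexive R M]

/-- The induced endomorphism of `M`. -/
noncomputable def traceEnd (g : Module.End R (traceIdeal R M)) : Module.End R M :=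
  ((Module.evalEquiv R M).symm : Module.Dual R (Module.Dual R M) →ₗ[R] M) ∘ₗ traceDualLM g

theorem traceEnd_spec (g : Module.End R (traceIdeal R M)) (α : M →ₗ[R] R) (m : M) :
    α (traceEnd g m) = (g ⟨α m, apply_mem_traceIdeal α m⟩ : R) :=
  Module.apply_evalEquiv_symm_apply R M α (traceDualLM g m)

theorem eq_of_forall_dual {x y : M} (h : ∀ α : Module.Dual R M, α x = α y) : x = y :=
  (Module.evalEquiv R M).injective (LinearMap.ext h)

theorem traceEnd_unique (g : Module.End R (traceIdeal R M)) (f : Module.End R M)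
    (h : ∀ (α : M →ₗ[R] R) (m : M), α (f m) = (g ⟨α m, apply_mem_traceIdeal α m⟩ : R)) :
    f = traceEnd g := by
  ext m
  exact eq_of_forall_dual fun α => (h α m).trans (traceEnd_spec g α m).symm

theorem traceEnd_injective :
    Function.Injective (traceEnd (R := R) (M := M)) := by
  intro g g' h
  set d : traceIdeal R M →ₗ[R] R := (traceIdeal R M).subtype ∘ₗ (g - g') with hd
  have hle : traceIdeal R M ≤ Submodule.map (traceIdeal R M).subtype (LinearMap.ker d) := by
    refine iSup_le fun α => ?_
    rintro _ ⟨m, rfl⟩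
    refine ⟨⟨α m, apply_mem_traceIdeal α m⟩, ?_, rfl⟩
    show d ⟨α m, apply_mem_traceIdeal α m⟩ = 0
    have hdv : d ⟨α m, apply_mem_traceIdeal α m⟩
        = (g ⟨α m, apply_mem_traceIdeal α m⟩ : R)
          - (g' ⟨α m, apply_mem_traceIdeal α m⟩ : R) := rfl
    rw [hdv, ← traceEnd_spec g α m, ← traceEnd_spec g' α m, h, sub_self]
  ext x
  obtain ⟨y, hy, hyx⟩ := hle x.2
  have hxy : x = y := Subtype.ext hyx.symm
  rw [hxy]
  have hdy : d y = (g y : R) - (g' y : R) := rfl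
  have : (g y : R) - (g' y : R) = 0 := by rw [← hdy]; exact hy
  exact sub_eq_zero.mp this

end Aux

/-- Let `R` be a commutative ring and `M` a reflexive `R`-module.  For every endomorphism
`g` of the trace ideal `τ(M)` there is a unique endomorphism `f` of `M` with
`α (f m) = g (α m)` for all `α : M →ₗ[R] R` and `m : M`, and the assignment `σ : g ↦ f` is
an injective `R`-algebra homomorphism with image contained in the center of `End_R(M)`. -/
theorem trace_end_into_center (R : Type u) (M : Type v) [CommRing R] [AddCommGroup M]
    [Module R M] [Module.IsReflexive R M] :
    (∀ g : Module.End R (traceIdeal R M), ∃! f : Module.End R M,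
      ∀ (α : M →ₗ[R] R) (m : M),
        α (f m) = (g ⟨α m, apply_mem_traceIdeal α m⟩ : R)) ∧
    ∃ σ : Module.End R (traceIdeal R M) →ₐ[R] Module.End R M,
      Function.Injective σ ∧
      (∀ (g : Module.End R (traceIdeal R M)) (α : M →ₗ[R] R) (m : M),
        α (σ g m) = (g ⟨α m, apply_mem_traceIdeal α m⟩ : R)) ∧
      ∀ g : Module.End R (traceIdeal R M), σ g ∈ Subalgebra.center R (Module.End R M) := by
  have hmul : ∀ g g' : Module.End R (traceIdeal R M),
      traceEnd (R := R) (M := M) (g * g') = traceEnd g * traceEnd g' := by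
    intro g g'
    symm
    apply traceEnd_unique
    intro α m
    have h1 : α (traceEnd g (traceEnd g' m))
        = (g ⟨α (traceEnd g' m), apply_mem_traceIdeal α (traceEnd g' m)⟩ : R) :=
      traceEnd_spec g α (traceEnd g' m)
    have h2 : (⟨α (traceEnd g' m), apply_mem_traceIdeal α (traceEnd g' m)⟩ : traceIdeal R M)
        = g' ⟨α m, apply_mem_traceIdeal α m⟩ :=
      Subtype.ext (traceEnd_spec g' α m)
    show α ((traceEnd g) ((traceEnd g') m)) = _
    rw [h1, h2]; rfl
  have hone : traceEnd (R := R) (M := M) 1 = 1 := by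
    symm; apply traceEnd_unique; intro α m; rfl
  have hadd : ∀ g g' : Module.End R (traceIdeal R M),
      traceEnd (R := R) (M := M) (g + g') = traceEnd g + traceEnd g' := by
    intro g g'
    symm; apply traceEnd_unique; intro α m
    show α (traceEnd g m + traceEnd g' m) = _
    rw [map_add, traceEnd_spec, traceEnd_spec]; rfl
  have hzero : traceEnd (R := R) (M := M) 0 = 0 := by
    symm; apply traceEnd_unique; intro α m
    show α 0 = _; rw [map_zero]; rfl
  have hsmul : ∀ (r : R) (g : Module.End R (traceIdeal R M)),
      traceEnd (R := R) (M := M) (r • g) = r • traceEnd g := by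
    intro r g
    symm; apply traceEnd_unique; intro α m
    show α (r • traceEnd g m) = _
    rw [map_smul, traceEnd_spec]; rfl
  refine ⟨fun g => ⟨traceEnd g, traceEnd_spec g, fun f h => traceEnd_unique g f h⟩,
    ⟨{ toFun := traceEnd, map_one' := hone, map_mul' := hmul,
       map_zero' := hzero, map_add' := hadd, commutes' := ?_ },
      traceEnd_injective, traceEnd_spec, ?_⟩⟩
  · intro r
    show traceEnd ((algebraMap R (Module.End R (traceIdeal R M))) r)
        = (algebraMap R (Module.End R M)) r
    rw [show (algebraMap R (Module.End R (traceIdeal R M))) r = r • 1 from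
        Algebra.algebraMap_eq_smul_one r, hsmul, hone, ← Algebra.algebraMap_eq_smul_one]
  · intro g
    rw [Subalgebra.mem_center_iff]
    intro h
    show h * traceEnd g = traceEnd g * h
    ext m
    apply eq_of_forall_dual (R := R)
    intro α
    show α (h (traceEnd g m)) = α (traceEnd g (h m))
    rw [traceEnd_spec]
    have h1 : α (h (traceEnd g m)) = (α ∘ₗ h) (traceEnd g m) := rfl
    rw [h1, traceEnd_spec]
    exact gcongr_trace g _ _ rfl
end

section
/- Let R be a commutative ring and M a reflexive R-module. Then the endomorphism ring End_R(τ(M)) of the trace ideal of M is a commutative ring. -/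
universe u v

section aux

variable {R : Type u} {M : Type v} [CommRing R] [AddCommGroup M] [Module R M]

/-- Corestriction of a functional to the trace ideal. -/
noncomputable def coresTrace (α : M →ₗ[R] R) : M →ₗ[R] traceIdeal R M :=
  LinearMap.codRestrict (traceIdeal R M) α (apply_mem_traceIdeal α)

@[simp] lemma coresTrace_apply (α : M →ₗ[R] R) (m : M) :
    (coresTrace α m : R) = α m := rfl

/-- The map on duals induced by an endomorphism of the trace ideal. -/
noncomputable def Fmap (f : Module.End R (traceIdeal R M)) :
    Module.Dual R M →ₗ[R] Module.Dual R M where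
  toFun α := (traceIdeal R M).subtype ∘ₗ f ∘ₗ coresTrace α
  map_add' α β := by
    ext m
    have h : coresTrace (α + β) m = coresTrace α m + coresTrace β m :=
      Subtype.ext (by simp)
    simp [h]
  map_smul' c α := by
    ext m
    have h : coresTrace (c • α) m = c • coresTrace α m :=
      Subtype.ext (by simp)
    simp [h]

@[simp] lemma Fmap_apply (f : Module.End R (traceIdeal R M)) (α : M →ₗ[R] R) (m : M) :
    Fmap f α m = (f (coresTrace α m) : R) := rfl

variable [Module.IsReflexive R M]

/-- The endomorphism of `M` induced (via reflexivity) by an endomorphism of the trace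
ideal. -/
noncomputable def tilde (f : Module.End R (traceIdeal R M)) : M →ₗ[R] M :=
  (Module.evalEquiv R M).symm.toLinearMap ∘ₗ (Fmap f).dualMap ∘ₗ
    (Module.evalEquiv R M).toLinearMap

lemma key (f : Module.End R (traceIdeal R M)) (α : M →ₗ[R] R) (m : M) :
    α (tilde f m) = (f (coresTrace α m) : R) := by
  simp only [tilde, LinearMap.coe_comp, LinearEquiv.coe_coe, Function.comp_apply,
    Module.apply_evalEquiv_symm_apply, LinearMap.dualMap_apply, Module.evalEquiv_apply,
    Module.Dual.eval_apply, Fmap_apply]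

end aux

/-- Let `R` be a commutative ring and `M` a reflexive `R`-module.  Then the endomorphism
ring of the trace ideal of `M` is a commutative ring. -/
theorem end_traceIdeal_comm (R : Type u) (M : Type v) [CommRing R] [AddCommGroup M]
    [Module R M] [Module.IsReflexive R M] :
    ∀ f g : Module.End R (traceIdeal R M), f * g = g * f := by
  intro f g
  have H : ∀ (x : R) (hx : x ∈ traceIdeal R M),
      ((f (g ⟨x, hx⟩) : traceIdeal R M) : R) = ((g (f ⟨x, hx⟩) : traceIdeal R M) : R) := by
    intro x hx
    induction hx using Submodule.iSup_induction' with
    | mem α r hr =>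
      obtain ⟨m, rfl⟩ := hr
      show (f (g (coresTrace α m)) : R) = (g (f (coresTrace α m)) : R)
      have h1 : g (coresTrace α m) = coresTrace (Fmap g α) m := Subtype.ext rfl
      have h2 : coresTrace α (tilde f m) = f (coresTrace α m) :=
        Subtype.ext (by simp [key])
      calc (f (g (coresTrace α m)) : R)
          = (f (coresTrace (Fmap g α) m) : R) := by rw [h1]
        _ = (Fmap g α) (tilde f m) := (key f (Fmap g α) m).symm
        _ = (g (coresTrace α (tilde f m)) : R) := rfl
        _ = (g (f (coresTrace α m)) : R) := by rw [h2]
    | zero =>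
      have h0 : (⟨0, zero_mem _⟩ : traceIdeal R M) = 0 := rfl
      rw [h0]; simp
    | add x y hxm hym hx hy =>
      have hxy : (⟨x + y, add_mem hxm hym⟩ : traceIdeal R M) = ⟨x, hxm⟩ + ⟨y, hym⟩ := rfl
      rw [hxy]
      simp only [map_add, Submodule.coe_add, hx, hy]
  ext x
  obtain ⟨x, hx⟩ := x
  simp only [Module.End.mul_apply]
  exact H x hx
end

section
/- Let R be a commutative ring and let M and U be R-modules such that M generates U and U is M-torsionless. Then there is a well-defined ring homomorphism σ' : Z(End_R(M)) → Z(End_R(U)) determined by the property that for every q ∈ Z(End_R(M)), every finite family φ_i ∈ Hom_R(M,U) and m_i ∈ M, one has σ'(q)(Σ_i φ_i(m_i)) = Σ_i φ_i(q(m_i)). Moreover, if M is also U-torsionless, then σ' is injective. -/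
universe u v w

/-!
Cover `U` by `π : ⨁_{φ : M →ₗ U} M → U`. A central `q` acts summandwise on the direct sum, and
for every `d : U →ₗ M` one has `d ∘ π ∘ q = q ∘ d ∘ π`, since each `d ∘ φ` commutes with `q`.
As `U` is `M`-torsionless, this action therefore preserves `ker π` and descends to `U`, where it
sends `φ m` to `φ (q m)`. The result commutes with every `f : End U` because `f ∘ φ` is again a
map `M → U`, and injectivity follows by testing `q₁ m - q₂ m` against all maps `M → U`.
-/

open Function LinearMap

namespace LinearMap

variable {R N U V : Type*} [Ring R] [AddCommGroup N] [Module R N] [AddCommGroup U] [Module R U]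
  [AddCommGroup V] [Module R V]

noncomputable def descend (π : N →ₗ[R] U) (hπ : Surjective π) (f : N →ₗ[R] V)
    (h : ker π ≤ ker f) : U →ₗ[R] V :=
  (ker π).liftQ f h ∘ₗ (π.quotKerEquivOfSurjective hπ).symm.toLinearMap

@[simp]
theorem descend_apply (π : N →ₗ[R] U) (hπ : Surjective π) (f : N →ₗ[R] V)
    (h : ker π ≤ ker f) (x : N) : descend π hπ f h (π x) = f x := by
  simp [descend]

end LinearMap

theorem eq_zero_of_forall_linearMap_apply_eq_zero {R M U : Type*} [Semiring R]
    [AddCommMonoid M] [Module R M] [AddCommMonoid U] [Module R U]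
    (htorsionless : ∀ u : U, u ≠ 0 → ∃ d : U →ₗ[R] M, d u ≠ 0) {u : U}
    (hu : ∀ d : U →ₗ[R] M, d u = 0) : u = 0 := by
  by_contra h
  obtain ⟨d, hd⟩ := htorsionless u h
  exact hd (hu d)

namespace Module

variable (R M U : Type*) [CommRing R] [AddCommGroup M] [Module R M] [AddCommGroup U] [Module R U]

/-- The canonical map `⨁_{φ : M →ₗ U} M → U`; `M` generates `U` exactly when it is onto. -/
noncomputable def homEval : ((M →ₗ[R] U) →₀ M) →ₗ[R] U :=
  Finsupp.lsum R id

variable {R M U}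

@[simp]
theorem homEval_single (φ : M →ₗ[R] U) (m : M) : homEval R M U (Finsupp.single φ m) = φ m :=
  Finsupp.lsum_single R id φ m

theorem homEval_surjective (hgen : (⨆ φ : M →ₗ[R] U, LinearMap.range φ) = ⊤) :
    Surjective (homEval R M U) := by
  rw [← LinearMap.range_eq_top, eq_top_iff, ← hgen, iSup_le_iff]
  rintro φ _ ⟨m, rfl⟩
  exact ⟨Finsupp.single φ m, homEval_single φ m⟩

theorem linearMap_ext_of_generates {V : Type*} [AddCommGroup V] [Module R V]
    (hgen : (⨆ φ : M →ₗ[R] U, LinearMap.range φ) = ⊤) {f g : U →ₗ[R] V}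
    (h : ∀ (φ : M →ₗ[R] U) (m : M), f (φ m) = g (φ m)) : f = g := by
  rw [← LinearMap.cancel_right (homEval_surjective hgen)]
  exact Finsupp.lhom_ext fun φ m => by simpa using h φ m

theorem comp_homEval_comp_mapRange {q : Module.End R M}
    (hq : q ∈ Subalgebra.center R (Module.End R M)) (d : U →ₗ[R] M) :
    d ∘ₗ homEval R M U ∘ₗ Finsupp.mapRange.linearMap q = q ∘ₗ d ∘ₗ homEval R M U := by
  refine Finsupp.lhom_ext fun φ m => ?_
  simpa using LinearMap.congr_fun (Subalgebra.mem_center_iff.mp hq (d ∘ₗ φ)) m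

theorem ker_homEval_le_ker_comp_mapRange
    (htorsionless : ∀ u : U, u ≠ 0 → ∃ d : U →ₗ[R] M, d u ≠ 0) {q : Module.End R M}
    (hq : q ∈ Subalgebra.center R (Module.End R M)) :
    ker (homEval R M U) ≤ ker (homEval R M U ∘ₗ Finsupp.mapRange.linearMap q) := by
  intro x hx
  rw [mem_ker] at hx ⊢
  refine eq_zero_of_forall_linearMap_apply_eq_zero htorsionless fun d => ?_
  have hd := LinearMap.congr_fun (comp_homEval_comp_mapRange hq d) x
  simp only [LinearMap.comp_apply] at hd ⊢
  rw [hd, hx, map_zero, map_zero]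

variable (hgen : (⨆ φ : M →ₗ[R] U, LinearMap.range φ) = ⊤)
  (htorsionless : ∀ u : U, u ≠ 0 → ∃ d : U →ₗ[R] M, d u ≠ 0)

noncomputable def extendCentral (q : Subalgebra.center R (Module.End R M)) : Module.End R U :=
  descend (homEval R M U) (homEval_surjective hgen) _
    (ker_homEval_le_ker_comp_mapRange htorsionless q.2)

@[simp]
theorem extendCentral_apply (q : Subalgebra.center R (Module.End R M)) (φ : M →ₗ[R] U) (m : M) :
    extendCentral hgen htorsionless q (φ m) = φ ((q : Module.End R M) m) := by
  simpa [extendCentral] using descend_apply (homEval R M U) (homEval_surjective hgen) _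
    (ker_homEval_le_ker_comp_mapRange htorsionless q.2) (Finsupp.single φ m)

theorem extendCentral_mem_center (q : Subalgebra.center R (Module.End R M)) :
    extendCentral hgen htorsionless q ∈ Subalgebra.center R (Module.End R U) := by
  refine Subalgebra.mem_center_iff.mpr fun f => linearMap_ext_of_generates hgen fun φ m => ?_
  simpa using (extendCentral_apply hgen htorsionless q (f ∘ₗ φ) m).symm

noncomputable def centerEndHom :
    Subalgebra.center R (Module.End R M) →+* Subalgebra.center R (Module.End R U) where
  toFun q := ⟨extendCentral hgen htorsionless q, extendCentral_mem_center hgen htorsionless q⟩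
  map_one' := Subtype.ext <| linearMap_ext_of_generates hgen fun φ m => by simp
  map_mul' q₁ q₂ := Subtype.ext <| linearMap_ext_of_generates hgen fun φ m => by simp
  map_zero' := Subtype.ext <| linearMap_ext_of_generates hgen fun φ m => by simp
  map_add' q₁ q₂ := Subtype.ext <| linearMap_ext_of_generates hgen fun φ m => by simp

@[simp]
theorem centerEndHom_apply_apply (q : Subalgebra.center R (Module.End R M)) (φ : M →ₗ[R] U)
    (m : M) :
    (centerEndHom hgen htorsionless q : Module.End R U) (φ m) = φ ((q : Module.End R M) m) :=
  extendCentral_apply hgen htorsionless q φ m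

theorem centerEndHom_injective (htorsionlessM : ∀ x : M, x ≠ 0 → ∃ α : M →ₗ[R] U, α x ≠ 0) :
    Function.Injective (centerEndHom hgen htorsionless) := by
  intro q₁ q₂ h
  refine Subtype.ext <| LinearMap.ext fun m => sub_eq_zero.mp ?_
  refine eq_zero_of_forall_linearMap_apply_eq_zero htorsionlessM fun α => ?_
  have hα := LinearMap.congr_fun (congrArg Subtype.val h) (α m)
  simp only [centerEndHom_apply_apply] at hα
  rw [map_sub, hα, sub_self]

end Module

/-- Suzuki's theorem.  Let `R` be a commutative ring and `M`, `U` modules such that `M`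
generates `U` (the images of all maps `M →ₗ[R] U` span `U`) and `U` is `M`-torsionless
(every nonzero `u : U` is detected by some map `U →ₗ[R] M`).  Then there is a ring
homomorphism `σ' : Z(End_R M) → Z(End_R U)` with
`σ'(q)(Σ φᵢ(mᵢ)) = Σ φᵢ(q(mᵢ))` for all finite families `φᵢ : M →ₗ[R] U`, `mᵢ : M`;
moreover if `M` is `U`-torsionless then `σ'` is injective. -/
theorem center_end_hom_of_generates (R : Type u) (M : Type v) (U : Type w) [CommRing R]
    [AddCommGroup M] [Module R M] [AddCommGroup U] [Module R U]
    (hgen : (⨆ φ : M →ₗ[R] U, LinearMap.range φ) = ⊤)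
    (htorsionless : ∀ u : U, u ≠ 0 → ∃ d : U →ₗ[R] M, d u ≠ 0) :
    ∃ σ' : Subalgebra.center R (Module.End R M) →+* Subalgebra.center R (Module.End R U),
      (∀ (q : Subalgebra.center R (Module.End R M)) (n : ℕ)
          (φ : Fin n → (M →ₗ[R] U)) (m : Fin n → M),
        (σ' q : Module.End R U) (∑ i, φ i (m i))
          = ∑ i, φ i ((q : Module.End R M) (m i))) ∧
      ((∀ x : M, x ≠ 0 → ∃ α : M →ₗ[R] U, α x ≠ 0) → Function.Injective σ') :=
  ⟨Module.centerEndHom hgen htorsionless, fun q n φ m => by simp,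
    Module.centerEndHom_injective hgen htorsionless⟩
end

section
/- Let R be a reduced commutative Noetherian ring and M a finitely generated reflexive R-module. Then the map σ sending an endomorphism g of the trace ideal τ(M) to the unique endomorphism f of M satisfying α(f(m)) = g(α(m)) for all α ∈ Hom_R(M,R) and m ∈ M is an isomorphism of R-algebras from End_R(τ(M)) onto the center of End_R(M). -/
/-!
An endomorphism `g` of `τ(M)` acts on `M^*` by `α ↦ g ∘ α`; for reflexive `M` the transpose of
this action, read on `M^** ≅ M`, is the endomorphism `σ g` with `α ∘ σ g = g ∘ α`. Since the dual
separates points and `τ(M)` is spanned by the values `α m`, such an `f = σ g` is unique, central,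
and determines `g`.

Conversely a central `f` commutes with the rank-one maps `β(-) • n`, whence
`α (f m) * β n = α m * β (f n)`. So if `∑ αᵢ mᵢ = 0`, the element `t = ∑ αᵢ (f mᵢ)` of `τ(M)`
annihilates `τ(M)`; then `t² = 0`, and `t = 0` because `R` is reduced. Thus
`∑ αᵢ mᵢ ↦ ∑ αᵢ (f mᵢ)` is a well-defined endomorphism of `τ(M)`, and it is a preimage of `f`.
-/

universe u v

open Module

theorem LinearMap.exists_comp_eq_of_surjective_of_ker_le {R P T N : Type*} [CommRing R]
    [AddCommGroup P] [AddCommGroup T] [AddCommGroup N] [Module R P] [Module R T] [Module R N]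
    {s : P →ₗ[R] T} (hs : Function.Surjective s) {t : P →ₗ[R] N} (h : ker s ≤ ker t) :
    ∃ g : T →ₗ[R] N, g ∘ₗ s = t :=
  ⟨(ker s).liftQ t h ∘ₗ (s.quotKerEquivOfSurjective hs).symm.toLinearMap, by
    ext p
    simp⟩

section Trace

variable {R M : Type*} [CommRing R] [AddCommGroup M] [Module R M]

def TraceCompatible (g : Module.End R (traceIdeal R M)) (f : Module.End R M) : Prop :=
  ∀ (α : Dual R M) (m : M), α (f m) = (g ⟨α m, apply_mem_traceIdeal α m⟩ : R)

variable (R M) in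
noncomputable def traceMap : (Dual R M →₀ M) →ₗ[R] R := Finsupp.lsum R fun α => α

theorem traceMap_apply (d : Dual R M →₀ M) : traceMap R M d = d.sum fun α m => α m :=
  Finsupp.lsum_apply _ _ _

@[simp]
theorem traceMap_single (α : Dual R M) (m : M) : traceMap R M (Finsupp.single α m) = α m :=
  Finsupp.lsum_single _ _ _ _

theorem range_traceMap : LinearMap.range (traceMap R M) = traceIdeal R M := by
  refine le_antisymm ?_ (iSup_le fun α => ?_)
  · rintro _ ⟨d, rfl⟩
    rw [traceMap_apply]
    exact Submodule.finsuppSum_mem _ _ _ _ fun α _ => apply_mem_traceIdeal α _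
  · rintro _ ⟨m, rfl⟩
    exact ⟨Finsupp.single α m, traceMap_single α m⟩

theorem mul_eq_zero_of_mem_traceIdeal {t x : R} (ht : ∀ (α : Dual R M) (m : M), t * α m = 0)
    (hx : x ∈ traceIdeal R M) : t * x = 0 := by
  obtain ⟨d, rfl⟩ := range_traceMap.ge hx
  rw [traceMap_apply, Finsupp.sum, Finset.mul_sum]
  exact Finset.sum_eq_zero fun α _ => ht α (d α)

variable (R M) in
noncomputable def toTraceIdeal : (Dual R M →₀ M) →ₗ[R] traceIdeal R M :=
  (traceMap R M).codRestrict _ fun d => range_traceMap.le (LinearMap.mem_range_self _ d)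

@[simp]
theorem toTraceIdeal_single (α : Dual R M) (m : M) :
    toTraceIdeal R M (Finsupp.single α m) = ⟨α m, apply_mem_traceIdeal α m⟩ :=
  Subtype.ext (traceMap_single α m)

theorem toTraceIdeal_surjective : Function.Surjective (toTraceIdeal R M) := by
  rintro ⟨x, hx⟩
  obtain ⟨d, rfl⟩ := range_traceMap.ge hx
  exact ⟨d, rfl⟩

theorem TraceCompatible.left_unique {g g' : Module.End R (traceIdeal R M)} {f : Module.End R M}
    (hg : TraceCompatible g f) (hg' : TraceCompatible g' f) : g = g' := by
  refine (LinearMap.cancel_right toTraceIdeal_surjective).mp (Finsupp.lhom_ext fun α m => ?_)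
  simp only [LinearMap.comp_apply, toTraceIdeal_single]
  exact Subtype.ext ((hg α m).symm.trans (hg' α m))

theorem traceCompatible_one : TraceCompatible (1 : Module.End R (traceIdeal R M)) 1 :=
  fun _ _ => rfl

theorem traceCompatible_zero : TraceCompatible (0 : Module.End R (traceIdeal R M)) 0 :=
  fun α _ => map_zero α

theorem traceCompatible_algebraMap (r : R) :
    TraceCompatible (algebraMap R (Module.End R (traceIdeal R M)) r) (algebraMap R _ r) :=
  fun α m => by simp

theorem TraceCompatible.add {g g' : Module.End R (traceIdeal R M)} {f f' : Module.End R M}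
    (hf : TraceCompatible g f) (hf' : TraceCompatible g' f') :
    TraceCompatible (g + g') (f + f') :=
  fun α m => by simp [hf α m, hf' α m]

theorem TraceCompatible.mul {g g' : Module.End R (traceIdeal R M)} {f f' : Module.End R M}
    (hf : TraceCompatible g f) (hf' : TraceCompatible g' f') :
    TraceCompatible (g * g') (f * f') := fun α m => by
  rw [Module.End.mul_apply, hf α, Module.End.mul_apply]
  congr 2
  exact Subtype.ext (hf' α m)

theorem dual_apply_mul_eq_of_mem_center {f : Module.End R M}
    (hf : f ∈ Subalgebra.center R (Module.End R M)) (α β : Dual R M) (m n : M) :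
    α (f m) * β n = α m * β (f n) := by
  have h := congr($(Subalgebra.mem_center_iff.mp hf (α.smulRight n)) m)
  simpa [mul_comm] using congr(β $h)

theorem traceMap_mapRange_eq_zero [IsReduced R] {f : Module.End R M}
    (hf : f ∈ Subalgebra.center R (Module.End R M)) {d : Dual R M →₀ M}
    (hd : traceMap R M d = 0) : traceMap R M (Finsupp.mapRange.linearMap f d) = 0 := by
  set t := traceMap R M (Finsupp.mapRange.linearMap f d) with ht
  have ht_mem : t ∈ traceIdeal R M := range_traceMap.le (LinearMap.mem_range_self _ _)
  have ht_ann : ∀ (β : Dual R M) (n : M), t * β n = 0 := fun β n =>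
    calc t * β n = ∑ α ∈ d.support, α (f (d α)) * β n := by
          rw [ht, traceMap_apply, Finsupp.mapRange.linearMap_apply,
            Finsupp.sum_mapRange_index fun α => map_zero α, Finsupp.sum, Finset.sum_mul]
      _ = ∑ α ∈ d.support, α (d α) * β (f n) :=
          Finset.sum_congr rfl fun α _ => dual_apply_mul_eq_of_mem_center hf α β _ _
      _ = 0 := by rw [← Finset.sum_mul, ← Finsupp.sum, ← traceMap_apply, hd, zero_mul]
  exact IsReduced.eq_zero t
    ⟨2, by rw [pow_two]; exact mul_eq_zero_of_mem_traceIdeal ht_ann ht_mem⟩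

theorem exists_traceCompatible_of_mem_center [IsReduced R] {f : Module.End R M}
    (hf : f ∈ Subalgebra.center R (Module.End R M)) :
    ∃ g : Module.End R (traceIdeal R M), TraceCompatible g f := by
  have hker : LinearMap.ker (toTraceIdeal R M) ≤
      LinearMap.ker (toTraceIdeal R M ∘ₗ Finsupp.mapRange.linearMap f) := fun d hd =>
    Subtype.ext (traceMap_mapRange_eq_zero hf (congrArg Subtype.val hd))
  obtain ⟨g, hg⟩ := LinearMap.exists_comp_eq_of_surjective_of_ker_le toTraceIdeal_surjective hker
  refine ⟨g, fun α m => ?_⟩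
  have := congr($hg (Finsupp.single α m))
  simp only [LinearMap.comp_apply, toTraceIdeal_single, Finsupp.mapRange.linearMap_apply,
    Finsupp.mapRange_single] at this
  rw [this]

end Trace

section Dual

variable {R M : Type*} [CommRing R] [AddCommGroup M] [Module R M]

theorem TraceCompatible.right_unique (hM : Function.Injective (Dual.eval R M))
    {g : Module.End R (traceIdeal R M)} {f f' : Module.End R M}
    (hf : TraceCompatible g f) (hf' : TraceCompatible g f') : f = f' :=
  LinearMap.ext fun m => hM (LinearMap.ext fun α => (hf α m).trans (hf' α m).symm)

theorem TraceCompatible.mem_center (hM : Function.Injective (Dual.eval R M))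
    {g : Module.End R (traceIdeal R M)} {f : Module.End R M} (hf : TraceCompatible g f) :
    f ∈ Subalgebra.center R (Module.End R M) := by
  refine Subalgebra.mem_center_iff.mpr fun h =>
    LinearMap.ext fun m => hM (LinearMap.ext fun α => ?_)
  change (α ∘ₗ h) (f m) = α (f (h m))
  rw [hf (α ∘ₗ h), hf α]
  rfl

noncomputable def dualEndOfTraceIdeal (g : Module.End R (traceIdeal R M)) :
    Module.End R (Dual R M) where
  toFun α := (traceIdeal R M).subtype ∘ₗ g ∘ₗ α.codRestrict _ (apply_mem_traceIdeal α)
  map_add' α β := by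
    ext m
    exact congrArg Subtype.val <|
      map_add g ⟨α m, apply_mem_traceIdeal α m⟩ ⟨β m, apply_mem_traceIdeal β m⟩
  map_smul' r α := by
    ext m
    exact congrArg Subtype.val (map_smul g r ⟨α m, apply_mem_traceIdeal α m⟩)

variable [IsReflexive R M]

noncomputable def liftOfTraceIdeal (g : Module.End R (traceIdeal R M)) : Module.End R M :=
  (evalEquiv R M).symm.conj (dualEndOfTraceIdeal g).dualMap

theorem traceCompatible_liftOfTraceIdeal (g : Module.End R (traceIdeal R M)) :
    TraceCompatible g (liftOfTraceIdeal g) := fun α m => by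
  change evalEquiv R M (liftOfTraceIdeal g m) α = dualEndOfTraceIdeal g α m
  simp [liftOfTraceIdeal, LinearEquiv.conj_apply]

variable (R M) in
noncomputable def liftOfTraceIdealHom :
    Module.End R (traceIdeal R M) →ₐ[R] Subalgebra.center R (Module.End R M) :=
  have hM := (bijective_dual_eval R M).injective
  { toFun g := ⟨liftOfTraceIdeal g, (traceCompatible_liftOfTraceIdeal g).mem_center hM⟩
    map_one' := Subtype.ext <|
      (traceCompatible_liftOfTraceIdeal 1).right_unique hM traceCompatible_one
    map_mul' g g' := Subtype.ext <| (traceCompatible_liftOfTraceIdeal _).right_unique hM <|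
      (traceCompatible_liftOfTraceIdeal g).mul (traceCompatible_liftOfTraceIdeal g')
    map_zero' := Subtype.ext <|
      (traceCompatible_liftOfTraceIdeal 0).right_unique hM traceCompatible_zero
    map_add' g g' := Subtype.ext <| (traceCompatible_liftOfTraceIdeal _).right_unique hM <|
      (traceCompatible_liftOfTraceIdeal g).add (traceCompatible_liftOfTraceIdeal g')
    commutes' r := Subtype.ext <| (traceCompatible_liftOfTraceIdeal _).right_unique hM <|
      traceCompatible_algebraMap r }

theorem liftOfTraceIdealHom_bijective [IsReduced R] :
    Function.Bijective (liftOfTraceIdealHom R M) := by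
  refine ⟨fun g g' h => ?_, fun ⟨f, hf⟩ => ?_⟩
  · refine (traceCompatible_liftOfTraceIdeal g).left_unique ?_
    rw [show liftOfTraceIdeal g = liftOfTraceIdeal g' from congrArg Subtype.val h]
    exact traceCompatible_liftOfTraceIdeal g'
  · obtain ⟨g, hg⟩ := exists_traceCompatible_of_mem_center hf
    exact ⟨g, Subtype.ext <| (traceCompatible_liftOfTraceIdeal g).right_unique
      (bijective_dual_eval R M).injective hg⟩

end Dual

theorem trace_end_iso_center_of_reduced_general (R : Type u) (M : Type v) [CommRing R]
    [IsReduced R] [AddCommGroup M] [Module R M]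
    [Module.IsReflexive R M] :
    (∀ g : Module.End R (traceIdeal R M), ∃! f : Module.End R M,
      ∀ (α : M →ₗ[R] R) (m : M),
        α (f m) = (g ⟨α m, apply_mem_traceIdeal α m⟩ : R)) ∧
    ∃ e : Module.End R (traceIdeal R M) ≃ₐ[R] Subalgebra.center R (Module.End R M),
      ∀ (g : Module.End R (traceIdeal R M)) (α : M →ₗ[R] R) (m : M),
        α ((e g : Module.End R M) m) = (g ⟨α m, apply_mem_traceIdeal α m⟩ : R) :=
  ⟨fun g => ⟨liftOfTraceIdeal g, traceCompatible_liftOfTraceIdeal g, fun _ hf =>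
      TraceCompatible.right_unique (bijective_dual_eval R M).injective hf
        (traceCompatible_liftOfTraceIdeal g)⟩,
    AlgEquiv.ofBijective _ liftOfTraceIdealHom_bijective,
    fun g => traceCompatible_liftOfTraceIdeal g⟩

/-- Let `R` be a reduced commutative Noetherian ring and `M` a finitely generated reflexive
`R`-module.  Then the map sending an endomorphism `g` of the trace ideal `τ(M)` to the
unique endomorphism `f` of `M` satisfying `α (f m) = g (α m)` for all `α` and `m` is an
isomorphism of `R`-algebras from `End_R(τ(M))` onto the center of `End_R(M)`. -/
theorem trace_end_iso_center_of_reduced (R : Type u) (M : Type v) [CommRing R]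
    [IsNoetherianRing R] [IsReduced R] [AddCommGroup M] [Module R M] [Module.Finite R M]
    [Module.IsReflexive R M] :
    (∀ g : Module.End R (traceIdeal R M), ∃! f : Module.End R M,
      ∀ (α : M →ₗ[R] R) (m : M),
        α (f m) = (g ⟨α m, apply_mem_traceIdeal α m⟩ : R)) ∧
    ∃ e : Module.End R (traceIdeal R M) ≃ₐ[R] Subalgebra.center R (Module.End R M),
      ∀ (g : Module.End R (traceIdeal R M)) (α : M →ₗ[R] R) (m : M),
        α ((e g : Module.End R M) m) = (g ⟨α m, apply_mem_traceIdeal α m⟩ : R) :=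
  trace_end_iso_center_of_reduced_general R M
end

section
/- Let (R,m,k) be a commutative Noetherian local ring of depth at most 1 and I an ideal of R. If the natural restriction map R ≅ Hom_R(R,R) → Hom_R(I,R), sending r ∈ R to multiplication by r on I, is an isomorphism, then I = R. -/
/-!
If `I ≠ R` then `I ⊆ 𝔪`. Injectivity of `R → Hom(I, R)` says `ann I = 0`; as `I` kills `k`, this
forces `Hom(k, R) = 0`. Surjectivity says every map `I → R` is a multiplication, and since
`ann I = 0` the same holds for every map `𝔪 → R`, i.e. `Hom(R, R) → Hom(𝔪, R)` is onto. Reading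
`Ext¹(k, R)` off `0 → 𝔪 → R → k → 0` (compared with a projective resolution of `k`), this says
`Ext¹(k, R) = 0`, so `depth R ≥ 2`.
-/

open CategoryTheory

universe u

namespace LinearMap

variable {R : Type*} [CommRing R] {M N P X : Type*} [AddCommGroup M] [Module R M]
  [AddCommGroup N] [Module R N] [AddCommGroup P] [Module R P] [AddCommGroup X] [Module R X]

theorem exists_comp_eq_of_ker_le {q : M →ₗ[R] X} (hq : Function.Surjective q) {G : M →ₗ[R] N}
    (h : ker q ≤ ker G) : ∃ g : X →ₗ[R] N, g ∘ₗ q = G :=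
  ⟨(ker q).liftQ G h ∘ₗ (q.quotKerEquivOfSurjective hq).symm.toLinearMap, by
    ext m
    have : (q.quotKerEquivOfSurjective hq).symm (q m) = Submodule.Quotient.mk m :=
      (LinearEquiv.symm_apply_eq _).2 rfl
    simp [this]⟩

theorem exists_extend_ker_of_surjective [Module.Projective R P] {ρ : P →ₗ[R] X}
    (hρs : Function.Surjective ρ)
    (hρ : ∀ f : ker ρ →ₗ[R] N, ∃ g : P →ₗ[R] N, g ∘ₗ (ker ρ).subtype = f)
    {π : M →ₗ[R] X} (hπ : Function.Surjective π) (f : ker π →ₗ[R] N) :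
    ∃ g : M →ₗ[R] N, g ∘ₗ (ker π).subtype = f := by
  -- `M` is the pushout of `ker ρ → P` along `σ : ker ρ → ker π`, so `f` and an extension of
  -- `f ∘ σ` glue.
  obtain ⟨s, hs⟩ := Module.projective_lifting_property π ρ hπ
  have hs' : ∀ p, π (s p) = ρ p := fun p => congr($hs p)
  let σ : ker ρ →ₗ[R] ker π := codRestrict _ (s ∘ₗ (ker ρ).subtype) fun p => by
    simp [hs']
  obtain ⟨h, hh⟩ := hρ (f ∘ₗ σ)
  have hq : Function.Surjective ((ker π).subtype.coprod s) := fun m => by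
    obtain ⟨p, hp⟩ := hρs (π m)
    exact ⟨(⟨m - s p, by simp [hs', hp]⟩, p), by simp⟩
  have hker : ker ((ker π).subtype.coprod s) ≤ ker (f.coprod h) := fun ⟨n, p⟩ hnp => by
    have hsp : s p = -n := eq_neg_of_add_eq_zero_right hnp
    have hp : p ∈ ker ρ := by rw [mem_ker, ← hs', hsp, map_neg, n.2, neg_zero]
    have hn : n = -σ ⟨p, hp⟩ := Subtype.ext (eq_neg_of_add_eq_zero_left hnp)
    have hfσ : f (σ ⟨p, hp⟩) = h p := congr($hh ⟨p, hp⟩).symm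
    simp [hn, hfσ]
  obtain ⟨g, hg⟩ := exists_comp_eq_of_ker_le hq hker
  exact ⟨g, by ext n; simpa using congr($hg (n, 0))⟩

theorem exists_comp_eq_of_exact {P₂ P₁ P₀ Y : Type*} [AddCommGroup P₂] [Module R P₂]
    [AddCommGroup P₁] [Module R P₁] [AddCommGroup P₀] [Module R P₀] [AddCommGroup Y] [Module R Y]
    {d₂ : P₂ →ₗ[R] P₁} {d₁ : P₁ →ₗ[R] P₀} {π : P₀ →ₗ[R] X}
    (h₁ : Function.Exact d₂ d₁) (h₀ : Function.Exact d₁ π)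
    (hext : ∀ f : ker π →ₗ[R] Y, ∃ g : P₀ →ₗ[R] Y, g ∘ₗ (ker π).subtype = f)
    {φ : P₁ →ₗ[R] Y} (hφ : φ ∘ₗ d₂ = 0) : ∃ ψ : P₀ →ₗ[R] Y, ψ ∘ₗ d₁ = φ := by
  let q : P₁ →ₗ[R] ker π := codRestrict _ d₁ fun x => h₀.apply_apply_eq_zero x
  have hq : Function.Surjective q := fun ⟨y, hy⟩ => by
    obtain ⟨x, rfl⟩ := (h₀ y).1 hy
    exact ⟨x, rfl⟩
  have hker : ker q ≤ ker φ := fun x hx => by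
    obtain ⟨z, rfl⟩ := (h₁ x).1 congr(Subtype.val $hx)
    exact congr($hφ z)
  obtain ⟨φ', hφ'⟩ := exists_comp_eq_of_ker_le hq hker
  obtain ⟨ψ, hψ⟩ := hext φ'
  exact ⟨ψ, by rw [← hφ', ← hψ]; rfl⟩

end LinearMap

open Opposite Limits in
theorem isZero_Ext_one_of_forall_exists_extend {R : Type u} [CommRing R] {X Y : ModuleCat.{u} R}
    (h : ∀ (M : ModuleCat.{u} R) (π : M →ₗ[R] X), Function.Surjective π →
      ∀ f : LinearMap.ker π →ₗ[R] Y, ∃ g : M →ₗ[R] Y, g ∘ₗ (LinearMap.ker π).subtype = f) :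
    IsZero (((Ext R (ModuleCat.{u} R) 1).obj (op X)).obj Y) := by
  let P := projectiveResolution X
  refine IsZero.of_iso ?_ (P.isoExt 1 Y)
  rw [← HomologicalComplex.exactAt_iff_isZero_homology,
    HomologicalComplex.exactAt_iff' _ 0 1 2 (by simp) (by simp), ShortComplex.moduleCat_exact_iff]
  intro φ hφ
  have hφ' : (φ : P.complex.X 1 ⟶ Y).hom ∘ₗ (P.complex.d 2 1).hom = 0 := by
    have h0 : (P.complex.linearYonedaObj R Y).d 1 2 φ = 0 := hφ
    rw [ChainComplex.linearYonedaObj_d] at h0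
    exact congr(($h0).hom)
  obtain ⟨ψ, hψ⟩ := LinearMap.exists_comp_eq_of_exact
    ((ShortComplex.ShortExact.moduleCat_exact_iff_function_exact _).1 (P.exact_succ 0))
    ((ShortComplex.ShortExact.moduleCat_exact_iff_function_exact _).1 P.exact₀)
    (h _ _ ((ModuleCat.epi_iff_surjective (P.π.f 0)).1 inferInstance)) hφ'
  refine ⟨(ModuleCat.ofHom ψ : P.complex.X 0 ⟶ Y), ?_⟩
  change (P.complex.linearYonedaObj R Y).d 0 1 (ModuleCat.ofHom ψ) = φ
  rw [ChainComplex.linearYonedaObj_d]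
  exact ModuleCat.hom_ext hψ

namespace Ideal

variable {R : Type*} [CommRing R]

theorem faithfulSMul_of_injective_smul_subtype {J : Ideal R}
    (h : Function.Injective fun r : R => r • J.subtype) : FaithfulSMul R J :=
  ⟨fun hr => h (LinearMap.ext fun a => congr(Subtype.val $(hr a)))⟩

theorem surjective_smul_subtype_of_le {J J' : Ideal R} (hJJ' : J ≤ J') [FaithfulSMul R J]
    (hJ : Function.Surjective fun r : R => r • J.subtype) :
    Function.Surjective fun r : R => r • J'.subtype := fun g => by
  obtain ⟨c, hc⟩ := hJ (g ∘ₗ Submodule.inclusion hJJ')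
  refine ⟨c, LinearMap.ext fun a => eq_of_smul_eq_smul fun b : J => Subtype.ext ?_⟩
  have hcb : c * (a * b) = g (Submodule.inclusion hJJ' ((a : R) • b)) := congr($hc ((a : R) • b))
  change c * a * b = g a * b
  calc c * a * b = c * (a * b) := mul_assoc _ _ _
    _ = g ((b : R) • a) := by rw [hcb]; congr 1; exact Subtype.ext (mul_comm _ _)
    _ = g a * b := by rw [map_smul, smul_eq_mul, mul_comm]

theorem subsingleton_linearMap_of_le_annihilator {I : Ideal R} [FaithfulSMul R I]
    {X : Type*} [AddCommGroup X] [Module R X] (h : I ≤ Module.annihilator R X) :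
    Subsingleton (X →ₗ[R] R) :=
  ⟨fun f g => LinearMap.ext fun x => eq_of_smul_eq_smul fun b : I => Subtype.ext <| by
    change f x * b = g x * b
    rw [mul_comm, ← smul_eq_mul, ← map_smul, mul_comm, ← smul_eq_mul, ← map_smul,
      Module.mem_annihilator.1 (h b.2) x, map_zero, map_zero]⟩

end Ideal

theorem IsLocalRing.maximalIdeal_le_annihilator_residueField (R : Type*) [CommRing R]
    [IsLocalRing R] :
    maximalIdeal R ≤ Module.annihilator R (ResidueField R) := fun a ha =>
  Module.mem_annihilator.2 fun z => by
    rw [Algebra.smul_def, ResidueField.algebraMap_eq, (residue_eq_zero_iff a).2 ha, zero_mul]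

open IsLocalRing in
theorem ideal_eq_top_of_dual_eq_general (R : Type u) [CommRing R]
    [IsLocalRing R] (hdepth : DepthLEOne R) (I : Ideal R)
    (hiso : Function.Bijective fun r : R => (r • I.subtype : I →ₗ[R] R)) :
    I = ⊤ := by
  by_contra hI
  have hIm : I ≤ maximalIdeal R := le_maximalIdeal hI
  have := Ideal.faithfulSMul_of_injective_smul_subtype hiso.1
  rcases hdepth with hHom | hExt
  · exact not_subsingleton _
      (Ideal.subsingleton_linearMap_of_le_annihilator (I := I)
        (hIm.trans (maximalIdeal_le_annihilator_residueField R)))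
  · let ρ := Algebra.linearMap R (ResidueField R)
    have hIρ : I ≤ LinearMap.ker ρ := fun a ha => by
      simpa [ρ, ResidueField.algebraMap_eq] using hIm ha
    have hρ := Ideal.surjective_smul_subtype_of_le hIρ hiso.2
    have hρext (f : LinearMap.ker ρ →ₗ[R] R) :
        ∃ g : R →ₗ[R] R, g ∘ₗ (LinearMap.ker ρ).subtype = f :=
      let ⟨c, hc⟩ := hρ f
      ⟨c • LinearMap.id, by rw [LinearMap.smul_comp, LinearMap.id_comp, ← hc]⟩
    have hρs : Function.Surjective ρ := residue_surjective
    have hzero := isZero_Ext_one_of_forall_exists_extend (X := .of R (ResidueField R))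
      (Y := .of R R) fun _ _ hπ => LinearMap.exists_extend_ker_of_surjective hρs hρext hπ
    exact not_subsingleton _ (ModuleCat.isZero_iff_subsingleton.1 hzero)

/-- Let `(R,m,k)` be a commutative Noetherian local ring of depth at most one and `I` an
ideal of `R`.  If the natural restriction map `R ≅ Hom_R(R,R) → Hom_R(I,R)`, sending `r` to
multiplication by `r` on `I`, is an isomorphism, then `I = R`. -/
theorem ideal_eq_top_of_dual_eq (R : Type u) [CommRing R] [IsNoetherianRing R]
    [IsLocalRing R] (hdepth : DepthLEOne R) (I : Ideal R)
    (hiso : Function.Bijective fun r : R => (r • I.subtype : I →ₗ[R] R)) :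
    I = ⊤ :=
  ideal_eq_top_of_dual_eq_general R hdepth I hiso
end
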